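/- arXiv:1301.7150 — 11 statements merged into one kernel-verified Lean document; each statement's English description precedes it below -/
import Mathlib

section
/- Let m > 2 be a real number. If f : ℝ → ℝ is a positive three-times differentiable function satisfying f(t)²·f'''(t) − (2(m+1)/(m−2))·f(t)·f'(t)·f''(t) + (m²/(m−2)²)·f'(t)³ = 0 for all t ∈ ℝ, then u := f'/f is twice differentiable and satisfies u''(t) + ((m−8)/(m−2))·u(t)·u'(t) − (2(m−4)/(m−2)²)·u(t)³ = 0 for all t ∈ ℝ. Conversely, if u : ℝ → ℝ is a twice differentiable solution of u''(t) + ((m−8)/(m−2))·u(t)·u'(t) − (2(m−4)/(m−2)²)·u(t)³ = 0 on ℝ, then for every positive constant C the function f(t) = C·exp(∫₀ᵗ u(s) ds) is a positive global solution of f²·f''' − (2(m+1)/(m−2))·f·f'·f'' + (m²/(m−2)²)·f'³ = 0 on ℝ. -/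
/-!
Writing `f' = u f`, one finds `f'' = (u' + u²) f` and `f''' = (u'' + 3 u u' + u³) f`, so that
`f² f''' - a f f' f'' + b f'³ = f³ (u'' + (3 - a) u u' + (1 - a + b) u³)` for any constants `a, b`.
For `a = 2(m+1)/(m-2)`, `b = m²/(m-2)²` the right-hand coefficients are those of (5.6), and `f³`
never vanishes. Both `u = f'/f` and `f = C exp (∫₀ᵗ u)` satisfy `f' = u f`.
-/

open Real

section ColeHopf

variable {f u : ℝ → ℝ}

theorem deriv_eq_div_mul_self (hf : ∀ t, f t ≠ 0) :
    deriv f = (fun t => deriv f t / f t) * f :=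
  funext fun t => (div_mul_cancel₀ _ (hf t)).symm

theorem deriv_deriv_div_self (hf : Differentiable ℝ f) (hf' : Differentiable ℝ (deriv f))
    (hf0 : ∀ t, f t ≠ 0) :
    deriv (fun t => deriv f t / f t) = fun t => deriv (deriv f) t / f t - (deriv f t / f t) ^ 2 := by
  funext t
  rw [deriv_fun_div (hf' t) (hf t) (hf0 t)]
  field_simp

theorem deriv_deriv_of_deriv_eq_mul (hu : Differentiable ℝ u) (hf : Differentiable ℝ f)
    (hfu : deriv f = u * f) :
    deriv (deriv f) = (deriv u + u ^ 2) * f := by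
  funext t
  rw [hfu, deriv_mul (hu t) (hf t), hfu]
  simp only [Pi.mul_apply, Pi.add_apply, Pi.pow_apply]
  ring

theorem deriv_deriv_deriv_of_deriv_eq_mul (hu : Differentiable ℝ u)
    (hu' : Differentiable ℝ (deriv u)) (hf : Differentiable ℝ f) (hfu : deriv f = u * f) :
    deriv (deriv (deriv f)) = (deriv (deriv u) + 3 * u * deriv u + u ^ 3) * f := by
  funext t
  rw [deriv_deriv_of_deriv_eq_mul hu hf hfu, deriv_mul ((hu'.add (hu.pow 2)) t) (hf t),
    deriv_add (hu' t) ((hu.pow 2) t), deriv_pow (hu t), hfu]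
  simp only [Pi.mul_apply, Pi.add_apply, Pi.pow_apply, Pi.ofNat_apply]
  ring

theorem thirdOrder_eq_cube_mul_of_deriv_eq_mul (a b : ℝ) (hu : Differentiable ℝ u)
    (hu' : Differentiable ℝ (deriv u)) (hf : Differentiable ℝ f) (hfu : deriv f = u * f) (t : ℝ) :
    f t ^ 2 * deriv (deriv (deriv f)) t - a * f t * deriv f t * deriv (deriv f) t
        + b * deriv f t ^ 3
      = f t ^ 3 * (deriv (deriv u) t + (3 - a) * u t * deriv u t + (1 - a + b) * u t ^ 3) := by
  rw [deriv_deriv_deriv_of_deriv_eq_mul hu hu' hf hfu, deriv_deriv_of_deriv_eq_mul hu hf hfu, hfu]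
  simp only [Pi.mul_apply, Pi.add_apply, Pi.pow_apply, Pi.ofNat_apply]
  ring

theorem coleHopf_identity {m : ℝ} (hm : m - 2 ≠ 0) (hu : Differentiable ℝ u)
    (hu' : Differentiable ℝ (deriv u)) (hf : Differentiable ℝ f) (hfu : deriv f = u * f) (t : ℝ) :
    f t ^ 2 * deriv (deriv (deriv f)) t
        - (2 * (m + 1) / (m - 2)) * f t * deriv f t * deriv (deriv f) t
        + (m ^ 2 / (m - 2) ^ 2) * deriv f t ^ 3
      = f t ^ 3 * (deriv (deriv u) t + ((m - 8) / (m - 2)) * u t * deriv u t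
        - (2 * (m - 4) / (m - 2) ^ 2) * u t ^ 3) := by
  rw [thirdOrder_eq_cube_mul_of_deriv_eq_mul _ _ hu hu' hf hfu]
  have h₁ : 3 - 2 * (m + 1) / (m - 2) = (m - 8) / (m - 2) := by field_simp; ring
  have h₂ : 1 - 2 * (m + 1) / (m - 2) + m ^ 2 / (m - 2) ^ 2 = -(2 * (m - 4) / (m - 2) ^ 2) := by
    field_simp; ring
  rw [h₁, h₂, neg_mul, ← sub_eq_add_neg]

theorem hasDerivAt_const_mul_exp_integral (hu : Continuous u) (C t : ℝ) :
    HasDerivAt (fun x => C * exp (∫ s in (0 : ℝ)..x, u s))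
      (u t * (C * exp (∫ s in (0 : ℝ)..t, u s))) t :=
  ((hu.integral_hasStrictDerivAt 0 t).hasDerivAt.exp.const_mul C).congr_deriv (by ring)

end ColeHopf

/-- Cole–Hopf transformation between the third-order ODE (1.1) and the
second-order ODE (5.6). -/
theorem stmt_0 (m : ℝ) (hm : 2 < m) :
    (∀ f : ℝ → ℝ, (∀ t, 0 < f t) →
      Differentiable ℝ f → Differentiable ℝ (deriv f) →
      Differentiable ℝ (deriv (deriv f)) →
      (∀ t, (f t) ^ 2 * deriv (deriv (deriv f)) t
        - (2 * (m + 1) / (m - 2)) * f t * deriv f t * deriv (deriv f) t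
        + (m ^ 2 / (m - 2) ^ 2) * (deriv f t) ^ 3 = 0) →
      (Differentiable ℝ (fun t => deriv f t / f t) ∧
       Differentiable ℝ (deriv (fun t => deriv f t / f t)) ∧
       ∀ t, deriv (deriv (fun s => deriv f s / f s)) t
         + ((m - 8) / (m - 2)) * (deriv f t / f t)
            * deriv (fun s => deriv f s / f s) t
         - (2 * (m - 4) / (m - 2) ^ 2) * (deriv f t / f t) ^ 3 = 0))
    ∧
    (∀ u : ℝ → ℝ, Differentiable ℝ u → Differentiable ℝ (deriv u) →
      (∀ t, deriv (deriv u) t + ((m - 8) / (m - 2)) * u t * deriv u t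
        - (2 * (m - 4) / (m - 2) ^ 2) * (u t) ^ 3 = 0) →
      ∀ C : ℝ, 0 < C →
        ((∀ t, 0 < C * Real.exp (∫ s in (0:ℝ)..t, u s)) ∧
         Differentiable ℝ (fun t => C * Real.exp (∫ s in (0:ℝ)..t, u s)) ∧
         Differentiable ℝ (deriv (fun t => C * Real.exp (∫ s in (0:ℝ)..t, u s))) ∧
         Differentiable ℝ (deriv (deriv (fun t => C * Real.exp (∫ s in (0:ℝ)..t, u s)))) ∧
         ∀ t, (C * Real.exp (∫ s in (0:ℝ)..t, u s)) ^ 2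
              * deriv (deriv (deriv (fun x => C * Real.exp (∫ s in (0:ℝ)..x, u s)))) t
           - (2 * (m + 1) / (m - 2)) * (C * Real.exp (∫ s in (0:ℝ)..t, u s))
              * deriv (fun x => C * Real.exp (∫ s in (0:ℝ)..x, u s)) t
              * deriv (deriv (fun x => C * Real.exp (∫ s in (0:ℝ)..x, u s))) t
           + (m ^ 2 / (m - 2) ^ 2)
              * (deriv (fun x => C * Real.exp (∫ s in (0:ℝ)..x, u s)) t) ^ 3 = 0)) := by
  have hm2 : m - 2 ≠ 0 := sub_ne_zero.2 hm.ne'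
  refine ⟨fun f hf0 hf hf' hf'' hode => ?_, fun u hu hu' hode C hC => ?_⟩
  · have hf0' : ∀ t, f t ≠ 0 := fun t => (hf0 t).ne'
    have hu : Differentiable ℝ (fun t => deriv f t / f t) := hf'.div hf hf0'
    have hu' : Differentiable ℝ (deriv fun t => deriv f t / f t) := by
      rw [deriv_deriv_div_self hf hf' hf0']
      exact (hf''.div hf hf0').sub (hu.pow 2)
    refine ⟨hu, hu', fun t => ?_⟩
    have key := coleHopf_identity hm2 hu hu' hf (deriv_eq_div_mul_self hf0') t
    rw [hode t, eq_comm, mul_eq_zero] at key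
    exact key.resolve_left (pow_ne_zero 3 (hf0' t))
  · have hfu : deriv (fun x => C * exp (∫ s in (0 : ℝ)..x, u s))
        = u * fun x => C * exp (∫ s in (0 : ℝ)..x, u s) :=
      funext fun t => (hasDerivAt_const_mul_exp_integral hu.continuous C t).deriv
    have hf : Differentiable ℝ fun x => C * exp (∫ s in (0 : ℝ)..x, u s) :=
      fun t => (hasDerivAt_const_mul_exp_integral hu.continuous C t).differentiableAt
    refine ⟨fun t => by positivity, hf, by rw [hfu]; exact hu.mul hf, ?_, fun t => ?_⟩
    · rw [deriv_deriv_of_deriv_eq_mul hu hf hfu]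
      exact (hu'.add (hu.pow 2)).mul hf
    · rw [coleHopf_identity hm2 hu hu' hf hfu, hode t, mul_zero]
end

section
/- Let A and C be positive real numbers. Then there is no differentiable function v : ℝ → ℝ satisfying v'(t) = √(A·v(t)⁴ + C) for all t ∈ ℝ; that is, every solution of this ODE blows up in finite time and its maximal interval of existence is a bounded interval (−T₀, T₁). -/
/-!
Since `A v⁴ + C` dominates both `C` and `A v⁴`, a solution satisfies `v' ≥ √C` and
`v' ≥ √A v²`. The first bound makes `v` positive at some time `t₀`; the second is a Riccati
inequality, under which `1 / v` decreases at rate at least `√A`, so it would reach `0` by time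
`t₀ + 1 / (√A v(t₀))`.
-/

open Filter Set

theorem tendsto_atTop_of_le_deriv {v : ℝ → ℝ} {c : ℝ} (hv : Differentiable ℝ v) (hc : 0 < c)
    (hderiv : ∀ t, c ≤ deriv v t) : Tendsto v atTop atTop := by
  have hlin : Tendsto (fun t => v 0 + c * t) atTop atTop :=
    tendsto_atTop_add_const_left _ _ (tendsto_id.const_mul_atTop hc)
  refine tendsto_atTop_mono' _ ?_ hlin
  filter_upwards [eventually_ge_atTop 0] with t ht
  have := mul_sub_le_image_sub_of_le_deriv hv hderiv ht
  linarith

section Riccati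

variable {v : ℝ → ℝ} {a t₀ : ℝ}

theorem monotone_of_mul_sq_le_deriv (hv : Differentiable ℝ v) (ha : 0 ≤ a)
    (hderiv : ∀ t, a * v t ^ 2 ≤ deriv v t) : Monotone v :=
  monotone_of_deriv_nonneg hv fun t => (mul_nonneg ha (sq_nonneg (v t))).trans (hderiv t)

theorem mul_sub_le_inv_sub_inv_of_mul_sq_le_deriv (hv : Differentiable ℝ v) (ha : 0 ≤ a)
    (hv₀ : 0 < v t₀) (hderiv : ∀ t, a * v t ^ 2 ≤ deriv v t) {t : ℝ} (ht : t₀ ≤ t) :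
    a * (t - t₀) ≤ (v t₀)⁻¹ - (v t)⁻¹ := by
  have hpos : ∀ s ∈ Ici t₀, 0 < v s := fun s hs =>
    hv₀.trans_le (monotone_of_mul_sq_le_deriv hv ha hderiv hs)
  have hinv : ∀ s ∈ Ici t₀, HasDerivAt (-v⁻¹) (deriv v s / v s ^ 2) s :=
    fun s hs => by
      simpa [neg_div] using ((hv s).hasDerivAt.inv (hpos s hs).ne').neg
  have key := (convex_Ici t₀).mul_sub_le_image_sub_of_le_deriv
    (fun s hs => (hinv s hs).continuousAt.continuousWithinAt)
    (fun s hs => (hinv s (interior_subset hs)).differentiableAt.differentiableWithinAt)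
    (fun s hs => by
      have hs := interior_subset hs
      rw [(hinv s hs).deriv, le_div_iff₀ (pow_pos (hpos s hs) 2)]
      exact hderiv s)
    t₀ self_mem_Ici t ht ht
  simp only [Pi.neg_apply, Pi.inv_apply] at key
  linarith

theorem false_of_mul_sq_le_deriv (hv : Differentiable ℝ v) (ha : 0 < a) (hv₀ : 0 < v t₀)
    (hderiv : ∀ t, a * v t ^ 2 ≤ deriv v t) : False := by
  set t := t₀ + (a * v t₀)⁻¹
  have ht : t₀ ≤ t := le_add_of_nonneg_right (by positivity)
  have hvt : 0 < v t := hv₀.trans_le (monotone_of_mul_sq_le_deriv hv ha.le hderiv ht)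
  have := mul_sub_le_inv_sub_inv_of_mul_sq_le_deriv hv ha.le hv₀ hderiv ht
  have hlhs : a * (t - t₀) = (v t₀)⁻¹ := by
    simp only [t, add_sub_cancel_left, mul_inv, ← mul_assoc, mul_inv_cancel₀ ha.ne', one_mul]
  have := inv_pos.2 hvt
  linarith

end Riccati

/-- The ODE v' = √(A v⁴ + C), with A, C > 0, has no global solution on ℝ. -/
theorem stmt_1 (A C : ℝ) (hA : 0 < A) (hC : 0 < C) :
    ¬ ∃ v : ℝ → ℝ, Differentiable ℝ v ∧
      ∀ t : ℝ, deriv v t = Real.sqrt (A * (v t) ^ 4 + C) := by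
  rintro ⟨v, hv, hode⟩
  have hderiv_ge_sqrt_C : ∀ t, Real.sqrt C ≤ deriv v t := fun t => by
    rw [hode]
    exact Real.sqrt_le_sqrt (by nlinarith [pow_nonneg (sq_nonneg (v t)) 2])
  have hderiv_ge_sq : ∀ t, Real.sqrt A * v t ^ 2 ≤ deriv v t := fun t => by
    rw [hode, Real.le_sqrt (by positivity) (by positivity), mul_pow, Real.sq_sqrt hA.le]
    nlinarith
  obtain ⟨t₀, hv₀⟩ := ((tendsto_atTop_of_le_deriv hv (Real.sqrt_pos.2 hC)
    hderiv_ge_sqrt_C).eventually_gt_atTop 0).exists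
  exact false_of_mul_sq_le_deriv hv (Real.sqrt_pos.2 hA) hv₀ hderiv_ge_sq
end

section
/- Let A and C be positive real numbers and let a be a real number with A·a⁴ > C. Then there is no differentiable function v : ℝ → ℝ with v(0) = a satisfying v'(t) = √(A·v(t)⁴ − C) for all t ∈ ℝ (where necessarily A·v(t)⁴ ≥ C along the solution); that is, every solution with this initial value blows up in finite time and its maximal interval of existence is a bounded interval (−T₀, T₁). -/
/-! Reflecting `v` to `t ↦ -v (-t)` gives another solution, so we may assume `a > 0`. A solution
is then nondecreasing, hence `v ≥ a` on `[0, ∞)`, and there `A v⁴ - C ≥ (A - C / a⁴) v⁴`. So `v`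
satisfies the Riccati inequality `v' ≥ k v²` with `k = √(A - C / a⁴) > 0`, which forces
`1 / v(t) ≤ 1 / a - k t`; this becomes negative in finite time although `v > 0`. -/

open Set

theorem nonpos_of_mul_sq_le_deriv {v : ℝ → ℝ} {k : ℝ} (hk : 0 < k) (hv : Differentiable ℝ v)
    (hderiv : ∀ t, 0 ≤ t → k * v t ^ 2 ≤ deriv v t) : v 0 ≤ 0 := by
  by_contra! h0
  have hmono : MonotoneOn v (Ici 0) :=
    monotoneOn_of_deriv_nonneg (convex_Ici 0) hv.continuous.continuousOn hv.differentiableOn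
      fun t ht => (by positivity : 0 ≤ k * v t ^ 2).trans (hderiv t (interior_subset ht))
  have hpos : ∀ t ∈ Ici (0 : ℝ), 0 < v t := fun t ht => h0.trans_le (hmono self_mem_Ici ht ht)
  have hanti : AntitoneOn (fun t => (v t)⁻¹ + k * t) (Ici 0) := by
    refine antitoneOn_of_hasDerivWithinAt_nonpos (f' := fun t => -deriv v t / v t ^ 2 + k)
      (convex_Ici 0) ?_ (fun t ht => ?_) (fun t ht => ?_)
    · exact (hv.continuous.continuousOn.inv₀ fun t ht => (hpos t ht).ne').add (by fun_prop)
    · have ht : 0 < v t := hpos t (interior_subset ht)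
      exact (((hv t).hasDerivAt.inv ht.ne').add ((hasDerivAt_id t).const_mul k)
        |>.congr_deriv (by simp)).hasDerivWithinAt
    · have ht0 : 0 ≤ t := interior_subset ht
      have : k ≤ deriv v t / v t ^ 2 := (le_div_iff₀ (by nlinarith [hpos t ht0])).2 (hderiv t ht0)
      simp only [neg_div]
      linarith
  set T := (v 0)⁻¹ / k
  have hT : 0 ≤ T := by positivity
  have hkT : k * T = (v 0)⁻¹ := mul_div_cancel₀ _ hk.ne'
  have := hanti self_mem_Ici hT hT
  simp only [hkT, mul_zero, add_zero] at this
  linarith [inv_pos.2 (hpos T hT)]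

theorem mul_sq_le_sqrt_mul_pow_four_sub {A C a x : ℝ} (hC : 0 ≤ C) (ha : 0 < a) (hax : a ≤ x) :
    √(A - C / a ^ 4) * x ^ 2 ≤ √(A * x ^ 4 - C) := by
  have hx4 : a ^ 4 ≤ x ^ 4 := pow_le_pow_left₀ ha.le hax 4
  have hC' : C ≤ C / a ^ 4 * x ^ 4 := by
    rw [div_mul_eq_mul_div, le_div_iff₀ (by positivity)]
    exact mul_le_mul_of_nonneg_left hx4 hC
  calc √(A - C / a ^ 4) * x ^ 2 = √((A - C / a ^ 4) * x ^ 4) := by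
        rw [Real.sqrt_mul' _ (by positivity), show x ^ 4 = (x ^ 2) ^ 2 by ring,
          Real.sqrt_sq (sq_nonneg x)]
    _ ≤ √(A * x ^ 4 - C) := Real.sqrt_le_sqrt (by linarith)

def IsGlobalSolution (A C : ℝ) (v : ℝ → ℝ) : Prop :=
  Differentiable ℝ v ∧ ∀ t, deriv v t = √(A * v t ^ 4 - C)

namespace IsGlobalSolution

variable {A C : ℝ} {v : ℝ → ℝ}

theorem reflect (h : IsGlobalSolution A C v) : IsGlobalSolution A C (fun t => -v (-t)) := by
  refine ⟨(h.1.comp differentiable_neg).neg, fun t => ?_⟩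
  rw [deriv.fun_neg, deriv_comp_neg, neg_neg, h.2, Even.neg_pow (by decide)]

theorem mul_pow_four_le_of_pos (hC : 0 ≤ C) (h : IsGlobalSolution A C v) (h0 : 0 < v 0) :
    A * v 0 ^ 4 ≤ C := by
  by_contra! hA
  have hmono : Monotone v := monotone_of_deriv_nonneg h.1 fun t => h.2 t ▸ Real.sqrt_nonneg _
  have hk : 0 < √(A - C / v 0 ^ 4) :=
    Real.sqrt_pos.2 (sub_pos.2 ((div_lt_iff₀ (by positivity)).2 hA))
  refine h0.not_ge (nonpos_of_mul_sq_le_deriv hk h.1 fun t ht => ?_)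
  rw [h.2 t]
  exact mul_sq_le_sqrt_mul_pow_four_sub hC h0 (hmono ht)

end IsGlobalSolution

theorem stmt_2_general (A C a : ℝ) (hC : 0 < C) (ha : A * a ^ 4 > C) :
    ¬ ∃ v : ℝ → ℝ, Differentiable ℝ v ∧ v 0 = a ∧
      ∀ t : ℝ, deriv v t = Real.sqrt (A * (v t) ^ 4 - C) := by
  rintro ⟨v, hv, rfl, hode⟩
  have hsol : IsGlobalSolution A C v := ⟨hv, hode⟩
  rcases lt_trichotomy (v 0) 0 with hneg | hzero | hpos
  · have := hsol.reflect.mul_pow_four_le_of_pos hC.le (by simpa using hneg)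
    rw [neg_zero, Even.neg_pow (by decide)] at this
    linarith
  · simp only [hzero] at ha
    linarith
  · linarith [hsol.mul_pow_four_le_of_pos hC.le hpos]

/-- The ODE v' = √(A v⁴ − C), with A, C > 0 and initial value a with A a⁴ > C,
has no global solution on ℝ. -/
theorem stmt_2 (A C a : ℝ) (hA : 0 < A) (hC : 0 < C) (ha : A * a ^ 4 > C) :
    ¬ ∃ v : ℝ → ℝ, Differentiable ℝ v ∧ v 0 = a ∧
      ∀ t : ℝ, deriv v t = Real.sqrt (A * (v t) ^ 4 - C) :=
  stmt_2_general A C a hC ha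
end

section
/- Let A and B be real constants, let u be a twice differentiable real function on an interval containing 0 satisfying u''(t) = A·u(t)·u'(t) + B·u(t)³, and let k be a real number with 2k² + A·k − B = 0. Define g_k(u)(t) = u'(t) + k·u(t)². Then (d/dt) g_k(u)(t) = (A + 2k)·u(t)·g_k(u)(t) for all t, and consequently g_k(u)(t) = g_k(u)(0)·exp((A + 2k)·∫₀ᵗ u(s) ds). -/
/-!
Along a solution of `u'' = A u u' + B u³`, differentiating `g = u' + k u²` gives
`g' = (A + 2k) u g + (2k² + A k - B) u³`, so for a characteristic root `k` the function `g`
solves the linear equation `g' = (A + 2k) u g`. Multiplying by the integrating factor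
`exp (-(A + 2k) ∫₀ᵗ u)` yields a function with zero derivative on the interval, hence a constant.
-/

open Set Real

theorem hasDerivAt_intervalIntegral_of_continuousOn_Ioo {p : ℝ → ℝ} {a b t₀ t : ℝ}
    (hp : ContinuousOn p (Ioo a b)) (ht₀ : t₀ ∈ Ioo a b) (ht : t ∈ Ioo a b) :
    HasDerivAt (fun t => ∫ s in t₀..t, p s) (p t) t :=
  intervalIntegral.integral_hasDerivAt_right
    ((hp.mono (ordConnected_Ioo.uIcc_subset ht₀ ht)).intervalIntegrable)
    (hp.stronglyMeasurableAtFilter isOpen_Ioo t ht)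
    (hp.continuousAt (isOpen_Ioo.mem_nhds ht))

theorem eq_mul_exp_integral_of_hasDerivAt_mul {f p : ℝ → ℝ} {a b t₀ t : ℝ}
    (hp : ContinuousOn p (Ioo a b)) (hf : ∀ t ∈ Ioo a b, HasDerivAt f (p t * f t) t)
    (ht₀ : t₀ ∈ Ioo a b) (ht : t ∈ Ioo a b) :
    f t = f t₀ * exp (∫ s in t₀..t, p s) := by
  set P : ℝ → ℝ := fun t => ∫ s in t₀..t, p s
  have hderiv_zero : ∀ s ∈ Ioo a b, HasDerivAt (fun s => f s * exp (-P s)) 0 s := fun s hs => by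
    have hP := hasDerivAt_intervalIntegral_of_continuousOn_Ioo hp ht₀ hs
    refine ((hf s hs).mul hP.neg.exp).congr_deriv ?_
    ring
  have hconst : f t * exp (-P t) = f t₀ * exp (-P t₀) :=
    isOpen_Ioo.is_const_of_deriv_eq_zero isPreconnected_Ioo
      (fun s hs => (hderiv_zero s hs).differentiableAt.differentiableWithinAt)
      (fun s hs => (hderiv_zero s hs).deriv) ht ht₀
  have hP₀ : P t₀ = 0 := intervalIntegral.integral_same
  rw [hP₀, neg_zero, exp_zero, mul_one] at hconst
  rw [← hconst, mul_assoc, ← exp_add, neg_add_cancel, exp_zero, mul_one]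

theorem hasDerivAt_add_mul_sq_of_ode {A B k t : ℝ} {u u' u'' : ℝ → ℝ}
    (hk : 2 * k ^ 2 + A * k - B = 0) (hu : HasDerivAt u (u' t) t)
    (hu' : HasDerivAt u' (u'' t) t) (hode : u'' t = A * u t * u' t + B * u t ^ 3) :
    HasDerivAt (fun s => u' s + k * u s ^ 2) ((A + 2 * k) * u t * (u' t + k * u t ^ 2)) t := by
  refine (hu'.add ((hu.pow 2).const_mul k)).congr_deriv ?_
  rw [hode]
  linear_combination -u t ^ 3 * hk

/-- For a characteristic root k of 2k² + Ak − B = 0, the quantity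
g_k(u) = u' + k u² satisfies a linear first-order ODE along solutions of
u'' = A u u' + B u³, hence has an exponential integral representation. -/
theorem stmt_4 (A B k : ℝ) (a b : ℝ) (h0 : (0:ℝ) ∈ Set.Ioo a b)
    (hk : 2 * k ^ 2 + A * k - B = 0) (u u' u'' : ℝ → ℝ)
    (hu : ∀ t ∈ Set.Ioo a b, HasDerivAt u (u' t) t)
    (hu' : ∀ t ∈ Set.Ioo a b, HasDerivAt u' (u'' t) t)
    (hode : ∀ t ∈ Set.Ioo a b, u'' t = A * u t * u' t + B * (u t) ^ 3) :
    (∀ t ∈ Set.Ioo a b,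
      HasDerivAt (fun s => u' s + k * (u s) ^ 2)
        ((A + 2 * k) * u t * (u' t + k * (u t) ^ 2)) t) ∧
    (∀ t ∈ Set.Ioo a b,
      u' t + k * (u t) ^ 2
        = (u' 0 + k * (u 0) ^ 2)
            * Real.exp ((A + 2 * k) * ∫ s in (0:ℝ)..t, u s)) := by
  have hg : ∀ t ∈ Ioo a b, HasDerivAt (fun s => u' s + k * u s ^ 2)
      ((A + 2 * k) * u t * (u' t + k * u t ^ 2)) t :=
    fun t ht => hasDerivAt_add_mul_sq_of_ode hk (hu t ht) (hu' t ht) (hode t ht)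
  have hcont : ContinuousOn (fun s => (A + 2 * k) * u s) (Ioo a b) :=
    continuousOn_const.mul fun s hs => (hu s hs).continuousAt.continuousWithinAt
  refine ⟨hg, fun t ht => ?_⟩
  rw [← intervalIntegral.integral_const_mul]
  exact eq_mul_exp_integral_of_hasDerivAt_mul hcont hg h0 ht
end

section
/- Let B > 0. If u : ℝ → ℝ is a twice differentiable function satisfying u''(t) = B·u(t)³ for all t ∈ ℝ, then u is identically zero. Consequently, for m = 8 every positive three-times differentiable global solution f : ℝ → ℝ of f²·f''' − (2(m+1)/(m−2))·f·f'·f'' + (m²/(m−2)²)·f'³ = 0 is constant. -/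
/-!
If `u'' = B u³` with `B > 0`, then `h = u²` is nonnegative with `h'' ≥ 2B h²`. If `h` is positive
somewhere then, after possibly reversing time, it is positive and nondecreasing on a half-line
`[a, ∞)`, and the energy inequality `h'² ≥ (4B/3) (h - h(a))³` makes `(h - h(a))^(-1/2)` decrease
at a uniform rate while staying positive, which is impossible.

For the third-order equation, the Cole–Hopf substitution `u = f'/f` turns (1.1) with `m = 8` into
`u'' = (2/9) u³`, so `f'/f` vanishes.
-/

open Set

theorem mul_sub_le_image_sub_of_le_deriv_Ioi {φ : ℝ → ℝ} {a C t : ℝ} (hφ : Differentiable ℝ φ)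
    (hC : ∀ s, a < s → C ≤ deriv φ s) (ht : a ≤ t) : C * (t - a) ≤ φ t - φ a :=
  (convex_Ici a).mul_sub_le_image_sub_of_le_deriv hφ.continuous.continuousOn
    hφ.differentiableOn (fun s hs => hC s (by rwa [interior_Ici] at hs))
    a self_mem_Ici t ht ht

/-- `z = (√g)⁻¹` satisfies `z'² = g'² / (4 g³) ≥ κ / 4`, so the positive function `z` would
decrease at a uniform rate. -/
theorem false_of_mul_cube_le_sq_deriv {g : ℝ → ℝ} {a κ : ℝ} (hκ : 0 < κ)
    (hg : Differentiable ℝ g) (ha : 0 < g a) (hg' : ∀ t, a ≤ t → 0 ≤ deriv g t)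
    (hcube : ∀ t, a ≤ t → κ * g t ^ 3 ≤ deriv g t ^ 2) : False := by
  have hpos : ∀ t, a ≤ t → 0 < g t := fun t ht => by
    have := mul_sub_le_image_sub_of_le_deriv_Ioi hg (fun s hs => hg' s hs.le) ht
    linarith
  set z : ℝ → ℝ := fun t => (√(g t))⁻¹
  have hz : ∀ t, a ≤ t → HasDerivAt z (-(deriv g t / (2 * √(g t))) / √(g t) ^ 2) t :=
    fun t ht => ((hg t).hasDerivAt.sqrt (hpos t ht).ne').inv (Real.sqrt_pos.2 (hpos t ht)).ne'
  have hz_le : ∀ t, a ≤ t → -(deriv g t / (2 * √(g t))) / √(g t) ^ 2 ≤ -(√κ / 2) := by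
    intro t ht
    have hgt := hpos t ht
    have hsq : √κ * g t * √(g t) ≤ deriv g t := by
      refine (pow_le_pow_iff_left₀ (by positivity) (hg' t ht) two_ne_zero).1 ?_
      calc (√κ * g t * √(g t)) ^ 2 = κ * g t ^ 3 := by
            rw [mul_pow, mul_pow, Real.sq_sqrt hκ.le, Real.sq_sqrt hgt.le]; ring
        _ ≤ deriv g t ^ 2 := hcube t ht
    rw [Real.sq_sqrt hgt.le, neg_div, neg_le_neg_iff, div_div, le_div_iff₀ (by positivity)]
    linarith
  have hz_cont : ContinuousOn z (Ici a) := fun t ht => (hz t ht).continuousAt.continuousWithinAt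
  have hdecr : ∀ t, a ≤ t → z t - z a ≤ -(√κ / 2) * (t - a) := fun t ht =>
    (convex_Ici a).image_sub_le_mul_sub_of_deriv_le hz_cont
      (fun s hs => (hz s (interior_subset hs)).differentiableAt.differentiableWithinAt)
      (fun s hs => (hz s (interior_subset hs)).deriv ▸ hz_le s (interior_subset hs))
      a self_mem_Ici t ht ht
  have hza : 0 < z a := inv_pos.2 (Real.sqrt_pos.2 ha)
  have hT : a ≤ a + 2 * z a / √κ := by
    have : 0 < 2 * z a / √κ := by positivity
    linarith
  have hzT : 0 < z (a + 2 * z a / √κ) := inv_pos.2 (Real.sqrt_pos.2 (hpos _ hT))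
  have := hdecr _ hT
  have hκ' : 0 < √κ := Real.sqrt_pos.2 hκ
  rw [add_sub_cancel_left, show -(√κ / 2) * (2 * z a / √κ) = -z a by field_simp] at this
  linarith

/-- Multiplying by `h' ≥ 0` turns `h'' ≥ k h²` into the energy inequality
`h'² ≥ (2k/3) (h³ - h(a)³) ≥ (2k/3) (h - h(a))³`. -/
theorem false_of_mul_sq_le_deriv_deriv {h : ℝ → ℝ} {k a : ℝ} (hk : 0 < k)
    (hd : Differentiable ℝ h) (hd2 : Differentiable ℝ (deriv h)) (ha : 0 < h a)
    (ha' : 0 ≤ deriv h a) (hineq : ∀ t, a ≤ t → k * h t ^ 2 ≤ deriv (deriv h) t) : False := by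
  have hslope : ∀ t, a ≤ t → deriv h a ≤ deriv h t := fun t ht => by
    have := mul_sub_le_image_sub_of_le_deriv_Ioi hd2
      (fun s hs => (by positivity : 0 ≤ k * h s ^ 2).trans (hineq s hs.le)) ht
    linarith
  have hmono : ∀ t, a ≤ t → h a ≤ h t := fun t ht => by
    have := mul_sub_le_image_sub_of_le_deriv_Ioi hd (fun s hs => ha'.trans (hslope s hs.le)) ht
    linarith
  have hslope_pos : ∀ t, a < t → 0 < deriv h t := fun t ht => by
    have := mul_sub_le_image_sub_of_le_deriv_Ioi hd2 (C := k * h a ^ 2)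
      (fun s hs => (hineq s hs.le).trans' (by gcongr; exact hmono s hs.le)) ht.le
    have := mul_pos (mul_pos hk (pow_pos ha 2)) (sub_pos.2 ht)
    linarith
  have hstep : h a < h (a + 1) :=
    strictMonoOn_of_deriv_pos (convex_Ici a) hd.continuous.continuousOn
      (fun s hs => hslope_pos s (by rwa [interior_Ici] at hs)) self_mem_Ici
      (by simp) (by linarith)
  have henergy : ∀ t, a ≤ t → 2 * k / 3 * (h t - h a) ^ 3 ≤ deriv h t ^ 2 := by
    set w : ℝ → ℝ := fun t => deriv h t ^ 2 - 2 * k / 3 * h t ^ 3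
    have hw : ∀ t, HasDerivAt w (2 * deriv h t * (deriv (deriv h) t - k * h t ^ 2)) t :=
      fun t => by
        refine (((hd2 t).hasDerivAt.fun_pow 2).fun_sub
          (((hd t).hasDerivAt.fun_pow 3).const_mul (2 * k / 3))).congr_deriv ?_
        push_cast
        ring
    intro t ht
    have := mul_sub_le_image_sub_of_le_deriv_Ioi (C := 0) (fun t => (hw t).differentiableAt)
      (fun s hs => (hw s).deriv ▸ mul_nonneg (mul_nonneg zero_le_two (ha'.trans (hslope s hs.le)))
        (sub_nonneg.2 (hineq s hs.le))) ht
    have hta := hmono t ht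
    simp only [w] at this
    nlinarith [sq_nonneg (deriv h a), mul_nonneg (mul_nonneg ha.le (ha.le.trans hta))
      (sub_nonneg.2 hta)]
  exact false_of_mul_cube_le_sq_deriv (g := fun t => h t - h a) (a := a + 1) (κ := 2 * k / 3)
    (by positivity) (hd.sub_const _) (sub_pos.2 hstep)
    (fun t ht => by rw [deriv_sub_const]; exact ha'.trans (hslope t (by linarith)))
    (fun t ht => by rw [deriv_sub_const]; exact henergy t (by linarith))

theorem eq_zero_of_mul_sq_le_deriv_deriv {h : ℝ → ℝ} {k : ℝ} (hk : 0 < k)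
    (hd : Differentiable ℝ h) (hd2 : Differentiable ℝ (deriv h)) (hnn : ∀ t, 0 ≤ h t)
    (hineq : ∀ t, k * h t ^ 2 ≤ deriv (deriv h) t) (t : ℝ) : h t = 0 := by
  by_contra hne
  have ht : 0 < h t := (hnn t).lt_of_ne' hne
  rcases le_total 0 (deriv h t) with hslope | hslope
  · exact false_of_mul_sq_le_deriv_deriv hk hd hd2 ht hslope fun s _ => hineq s
  · have hderiv : deriv (fun s => h (-s)) = fun s => -deriv h (-s) :=
      funext (deriv_comp_neg h)
    refine false_of_mul_sq_le_deriv_deriv (h := fun s => h (-s)) (a := -t) hk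
      (hd.comp differentiable_neg) ?_ (by simpa using ht) (by simpa [hderiv] using hslope)
      fun s _ => ?_
    · rw [hderiv]
      exact (hd2.comp differentiable_neg).neg
    · rw [hderiv, deriv.fun_neg, deriv_comp_neg (deriv h), neg_neg]
      exact hineq (-s)

/-- `u²` satisfies `(u²)'' = 2 u'² + 2 B u⁴ ≥ 2 B (u²)²`. -/
theorem eq_zero_of_deriv_deriv_eq_mul_cube {u : ℝ → ℝ} {B : ℝ} (hB : 0 < B)
    (hu : Differentiable ℝ u) (hu' : Differentiable ℝ (deriv u))
    (hode : ∀ t, deriv (deriv u) t = B * u t ^ 3) (t : ℝ) : u t = 0 := by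
  have hderiv : deriv (fun s => u s ^ 2) = fun s => 2 * u s * deriv u s :=
    funext fun s => by simpa using ((hu s).hasDerivAt.fun_pow 2).deriv
  have hderiv2 : ∀ s, HasDerivAt (fun s => 2 * u s * deriv u s)
      (2 * deriv u s * deriv u s + 2 * u s * deriv (deriv u) s) s :=
    fun s => ((hu s).hasDerivAt.const_mul 2).mul (hu' s).hasDerivAt
  refine pow_eq_zero_iff two_ne_zero |>.1 <|
    eq_zero_of_mul_sq_le_deriv_deriv (h := fun s => u s ^ 2) (k := 2 * B) (by positivity)
      (hu.pow 2) ?_ (fun s => sq_nonneg _) (fun s => ?_) t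
  · rw [hderiv]
    exact fun s => (hderiv2 s).differentiableAt
  · rw [hderiv, (hderiv2 s).deriv, hode]
    nlinarith [sq_nonneg (deriv u s)]

section logDeriv

variable {f : ℝ → ℝ}

theorem hasDerivAt_logDeriv {t : ℝ} (hf : DifferentiableAt ℝ f t)
    (hf' : DifferentiableAt ℝ (deriv f) t) (hne : f t ≠ 0) :
    HasDerivAt (logDeriv f) (deriv (deriv f) t / f t - logDeriv f t ^ 2) t := by
  refine (hf'.hasDerivAt.div hf.hasDerivAt hne).congr_deriv ?_
  rw [logDeriv_apply]
  field_simp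

theorem hasDerivAt_deriv_logDeriv {t : ℝ} (hf : Differentiable ℝ f)
    (hf' : Differentiable ℝ (deriv f)) (hf'' : DifferentiableAt ℝ (deriv (deriv f)) t)
    (hne : ∀ s, f s ≠ 0) :
    HasDerivAt (deriv (logDeriv f)) ((f t ^ 2 * deriv (deriv (deriv f)) t
      - 3 * f t * deriv f t * deriv (deriv f) t + 2 * deriv f t ^ 3) / f t ^ 3) t := by
  have hderiv : deriv (logDeriv f) = fun s => deriv (deriv f) s / f s - logDeriv f s ^ 2 :=
    funext fun s => (hasDerivAt_logDeriv (hf s) (hf' s) (hne s)).deriv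
  rw [hderiv]
  refine ((hf''.hasDerivAt.div (hf t).hasDerivAt (hne t)).fun_sub
    ((hasDerivAt_logDeriv (hf t) (hf' t) (hne t)).fun_pow 2)).congr_deriv ?_
  have := hne t
  norm_num only [logDeriv_apply]
  field_simp
  ring

/-- `hode` is (1.1) for `m = 8`; by `hasDerivAt_deriv_logDeriv`, `u = f'/f` then solves (5.6),
`u'' = (2/9) u³`. -/
theorem deriv_eq_zero_of_thirdOrderODE_eight (hf : Differentiable ℝ f)
    (hf' : Differentiable ℝ (deriv f)) (hf'' : Differentiable ℝ (deriv (deriv f)))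
    (hne : ∀ t, f t ≠ 0)
    (hode : ∀ t, f t ^ 2 * deriv (deriv (deriv f)) t
      = 3 * f t * deriv f t * deriv (deriv f) t - 16 / 9 * deriv f t ^ 3)
    (t : ℝ) : deriv f t = 0 := by
  have hu := fun s => hasDerivAt_deriv_logDeriv hf hf' (hf'' s) hne (t := s)
  have hlog := eq_zero_of_deriv_deriv_eq_mul_cube (u := logDeriv f) (B := 2 / 9) (by norm_num)
    (fun s => (hasDerivAt_logDeriv (hf s) (hf' s) (hne s)).differentiableAt)
    (fun s => (hu s).differentiableAt) (fun s => ?_) t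
  · simpa [logDeriv_apply, hne t] using hlog
  · rw [(hu s).deriv, hode, logDeriv_apply]
    field_simp
    ring

end logDeriv

/-- Non-existence of non-trivial global solutions when A = 0, B > 0 (m = 8). -/
theorem stmt_6 (B : ℝ) (hB : 0 < B) :
    (∀ u : ℝ → ℝ, Differentiable ℝ u → Differentiable ℝ (deriv u) →
      (∀ t, deriv (deriv u) t = B * (u t) ^ 3) → ∀ t, u t = 0)
    ∧
    (∀ f : ℝ → ℝ, (∀ t, 0 < f t) →
      Differentiable ℝ f → Differentiable ℝ (deriv f) →
      Differentiable ℝ (deriv (deriv f)) →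
      (∀ t, (f t) ^ 2 * deriv (deriv (deriv f)) t
        - (2 * ((8:ℝ) + 1) / ((8:ℝ) - 2)) * f t * deriv f t * deriv (deriv f) t
        + ((8:ℝ) ^ 2 / ((8:ℝ) - 2) ^ 2) * (deriv f t) ^ 3 = 0) →
      ∀ s t, f s = f t) := by
  refine ⟨fun u hu hu' hode => eq_zero_of_deriv_deriv_eq_mul_cube hB hu hu' hode,
    fun f hpos hf hf' hf'' hode => is_const_of_deriv_eq_zero hf ?_⟩
  refine deriv_eq_zero_of_thirdOrderODE_eight hf hf' hf'' (fun t => (hpos t).ne') ?_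
  intro t
  have := hode t
  norm_num at this
  linarith
end

section
/- Let A > 0 and B > 0 be real constants. If u : ℝ → ℝ is a twice differentiable function satisfying u''(t) = A·u(t)·u'(t) + B·u(t)³ for all t ∈ ℝ and u'(0) ≥ 0, then u is identically zero. (Equivalently: every solution with initial data u'(0) ≥ 0 and (u(0), u'(0)) ≠ (0,0) blows up in finite time and cannot be extended to all of ℝ.) -/
/-
Along a solution of `v'' = C v v' + B v³`, the derivative of the weighted Riccati defect
`(v' - μ v²) · exp ((2μ - C) ∫ v)` is `(B + C μ - 2 μ²) v³` times the same weight, and the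
quadratic `B + C μ - 2 μ²` has roots `q < 0 < p` because `B > 0`.
For `μ = q` the weighted defect is constant, so once `v > 0` and `v' ≥ 0` at some `t₀` we get
`v' > q v²` everywhere; then `v · exp (-q ∫ v)` increases and `v` stays positive on `[t₀, ∞)`.
For `0 ≤ μ < p` the weighted defect then increases on `[t₀, ∞)`: with `μ = 0` this makes `v'`
positive at some `t₁ > t₀`, and a small `μ > 0` then gives `v' ≥ μ v²` on `[t₁, ∞)`. So `1 / v`
decreases at rate at least `μ` and `v` blows up in finite time.
Hence a global solution never has `v > 0 ≤ v'` at a point; the symmetries `v ↦ -v` and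
`t ↦ -t`, which both turn `C` into `-C`, rule out every nonzero value.
-/

open Set Real

structure IsGlobalSolution_s7 (C B : ℝ) (v : ℝ → ℝ) : Prop where
  differentiable : Differentiable ℝ v
  differentiable_deriv : Differentiable ℝ (deriv v)
  deriv_deriv : ∀ t, deriv (deriv v) t = C * v t * deriv v t + B * v t ^ 3

noncomputable def riccatiDefect (C μ : ℝ) (v : ℝ → ℝ) (t : ℝ) : ℝ :=
  (deriv v t - μ * v t ^ 2) * exp ((2 * μ - C) * ∫ s in (0 : ℝ)..t, v s)

theorem exists_quadratic_factorization {B : ℝ} (hB : 0 < B) (C : ℝ) :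
    ∃ p q : ℝ, q < 0 ∧ 0 < p ∧ ∀ μ, B + C * μ - 2 * μ ^ 2 = 2 * (p - μ) * (μ - q) := by
  set s := √(C ^ 2 + 8 * B)
  have hs : s ^ 2 = C ^ 2 + 8 * B := sq_sqrt (by positivity)
  have hCs : |C| < s := abs_lt_of_sq_lt_sq (by nlinarith) (sqrt_nonneg _)
  refine ⟨(C + s) / 4, (C - s) / 4, ?_, ?_, fun μ => ?_⟩
  · linarith [le_abs_self C]
  · linarith [neg_abs_le C]
  · linear_combination (-1 / 8 : ℝ) * hs

theorem exists_nonpos_of_mul_sq_le_deriv {v : ℝ → ℝ} {μ a : ℝ} (hμ : 0 < μ)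
    (hv : Differentiable ℝ v) (hric : ∀ t ∈ Ici a, μ * v t ^ 2 ≤ deriv v t) :
    ∃ t ∈ Ici a, v t ≤ 0 := by
  by_contra! hpos
  have hanti : AntitoneOn (fun t => (v t)⁻¹ + μ * t) (Ici a) := by
    refine antitoneOn_of_hasDerivWithinAt_nonpos (convex_Ici a)
      ((hv.continuous.continuousOn.inv₀ fun t ht => (hpos t ht).ne').add
        (continuousOn_const.mul continuousOn_id)) (f' := fun t => -deriv v t / v t ^ 2 + μ)
      (fun t ht => ?_) (fun t ht => ?_) <;> rw [interior_Ici] at ht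
    · exact (((hv t).hasDerivAt.inv (hpos t (Ioi_subset_Ici_self ht)).ne').add
        ((hasDerivAt_id t).const_mul μ)).hasDerivWithinAt.congr_deriv (by simp)
    · have := le_div_iff₀ (pow_pos (hpos t (Ioi_subset_Ici_self ht)) 2) |>.2
        (hric t (Ioi_subset_Ici_self ht))
      simp only [neg_div]
      linarith
  -- the antitone bound `1 / v t ≤ 1 / v a - μ (t - a)` reaches `0` at `T`
  set T := a + (μ * v a)⁻¹
  have haT : a ≤ T := le_add_of_nonneg_right (inv_pos.2 (mul_pos hμ (hpos a self_mem_Ici))).le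
  have hT := hanti self_mem_Ici haT haT
  have hμT : μ * T = μ * a + (v a)⁻¹ := by
    rw [mul_add, mul_inv, ← mul_assoc, mul_inv_cancel₀ hμ.ne', one_mul]
  have := inv_pos.2 (hpos T haT)
  linarith

namespace IsGlobalSolution_s7

variable {C B : ℝ} {v : ℝ → ℝ}

theorem neg (h : IsGlobalSolution_s7 C B v) : IsGlobalSolution_s7 (-C) B (fun t => -v t) := by
  have hd : deriv (fun t => -v t) = fun t => -deriv v t := deriv.fun_neg'
  refine ⟨h.differentiable.neg, hd ▸ h.differentiable_deriv.neg, fun t => ?_⟩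
  simp only [hd, deriv.fun_neg', h.deriv_deriv]
  ring

theorem comp_neg (h : IsGlobalSolution_s7 C B v) : IsGlobalSolution_s7 (-C) B (fun t => v (-t)) := by
  have hd : deriv (fun t => v (-t)) = fun t => -deriv v (-t) := funext (deriv_comp_neg v)
  refine ⟨h.differentiable.comp differentiable_neg,
    hd ▸ (h.differentiable_deriv.comp differentiable_neg).neg, fun t => ?_⟩
  simp only [hd, deriv.fun_neg', deriv_comp_neg (deriv v), h.deriv_deriv]
  ring

theorem hasDerivAt_riccatiDefect (h : IsGlobalSolution_s7 C B v) (μ t : ℝ) :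
    HasDerivAt (riccatiDefect C μ v)
      ((B + C * μ - 2 * μ ^ 2) * v t ^ 3 * exp ((2 * μ - C) * ∫ s in (0 : ℝ)..t, v s)) t := by
  have hV := (h.differentiable.continuous.integral_hasStrictDerivAt 0 t).hasDerivAt
  refine (((h.differentiable_deriv t).hasDerivAt.sub
    (((h.differentiable t).hasDerivAt.pow 2).const_mul μ)).mul
      ((hV.const_mul (2 * μ - C)).exp)).congr_deriv ?_
  simp only [Pi.sub_apply, Pi.pow_apply, h.deriv_deriv]
  ring

theorem riccatiDefect_eq_of_root {μ : ℝ} (h : IsGlobalSolution_s7 C B v)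
    (hμ : B + C * μ - 2 * μ ^ 2 = 0) (s t : ℝ) : riccatiDefect C μ v s = riccatiDefect C μ v t :=
  is_const_of_deriv_eq_zero (fun t => (h.hasDerivAt_riccatiDefect μ t).differentiableAt)
    (fun t => by rw [(h.hasDerivAt_riccatiDefect μ t).deriv, hμ, zero_mul, zero_mul]) s t

theorem strictMonoOn_riccatiDefect {μ : ℝ} (h : IsGlobalSolution_s7 C B v)
    (hμ : 0 < B + C * μ - 2 * μ ^ 2) {a : ℝ} (hv : ∀ t ∈ Ioi a, 0 < v t) :
    StrictMonoOn (riccatiDefect C μ v) (Ici a) :=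
  strictMonoOn_of_hasDerivWithinAt_pos (convex_Ici a)
    (fun t _ => (h.hasDerivAt_riccatiDefect μ t).continuousAt.continuousWithinAt)
    (fun t _ => (h.hasDerivAt_riccatiDefect μ t).hasDerivWithinAt)
    (fun t ht => by
      rw [interior_Ici] at ht
      have := hv t ht
      positivity)

theorem mul_sq_lt_deriv {μ : ℝ} (h : IsGlobalSolution_s7 C B v) (hμ : 0 < B + C * μ - 2 * μ ^ 2)
    {a t : ℝ} (hv : ∀ t ∈ Ioi a, 0 < v t) (ha : μ * v a ^ 2 ≤ deriv v a) (hat : a < t) :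
    μ * v t ^ 2 < deriv v t := by
  have hdefect : riccatiDefect C μ v a < riccatiDefect C μ v t :=
    h.strictMonoOn_riccatiDefect hμ hv self_mem_Ici hat.le hat
  have ha' : 0 ≤ riccatiDefect C μ v a := mul_nonneg (sub_nonneg.2 ha) (exp_pos _).le
  have := pos_of_mul_pos_left (ha'.trans_lt hdefect) (exp_pos _).le
  linarith

theorem pos_of_pos_of_deriv_nonneg (h : IsGlobalSolution_s7 C B v) (hB : 0 < B) {t₀ : ℝ}
    (h0 : 0 < v t₀) (h1 : 0 ≤ deriv v t₀) : ∀ t ∈ Ici t₀, 0 < v t := by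
  obtain ⟨p, q, hq, -, hfac⟩ := exists_quadratic_factorization hB C
  have hroot : B + C * q - 2 * q ^ 2 = 0 := by rw [hfac]; ring
  have hdefect : ∀ s, 0 < deriv v s - q * v s ^ 2 := fun s => by
    have hs : 0 < riccatiDefect C q v s := by
      rw [h.riccatiDefect_eq_of_root hroot s t₀]
      exact mul_pos (by linarith [mul_pos (neg_pos.2 hq) (pow_pos h0 2)]) (exp_pos _)
    exact pos_of_mul_pos_left hs (exp_pos _).le
  set V := fun s => ∫ r in (0 : ℝ)..s, v r
  have hmono : Monotone fun s => v s * exp (-q * V s) := by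
    refine monotone_of_hasDerivAt_nonneg
      (f' := fun s => (deriv v s - q * v s ^ 2) * exp (-q * V s)) (fun s => ?_)
      (fun s => (mul_pos (hdefect s) (exp_pos _)).le)
    have hV := (h.differentiable.continuous.integral_hasStrictDerivAt 0 s).hasDerivAt
    refine ((h.differentiable s).hasDerivAt.mul ((hV.const_mul (-q)).exp)).congr_deriv ?_
    ring
  intro t ht
  exact pos_of_mul_pos_left ((mul_pos h0 (exp_pos _)).trans_le (hmono ht)) (exp_pos _).le

theorem deriv_neg_of_pos (h : IsGlobalSolution_s7 C B v) (hB : 0 < B) {t₀ : ℝ} (h0 : 0 < v t₀) :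
    deriv v t₀ < 0 := by
  by_contra! h1
  have hpos := h.pos_of_pos_of_deriv_nonneg hB h0 h1
  obtain ⟨t₁, ht₀₁⟩ := exists_gt t₀
  have hpos₀ : ∀ t ∈ Ioi t₀, 0 < v t := fun t ht => hpos t (Ioi_subset_Ici_self ht)
  have hpos₁ : ∀ t ∈ Ioi t₁, 0 < v t := fun t ht => hpos₀ t (ht₀₁.trans (mem_Ioi.1 ht))
  have hd₁ : 0 < deriv v t₁ := by
    simpa using h.mul_sq_lt_deriv (μ := 0) (by simpa) hpos₀ (by simpa) ht₀₁
  obtain ⟨p, q, hq, hp, hfac⟩ := exists_quadratic_factorization hB C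
  set μ := min (p / 2) (deriv v t₁ / v t₁ ^ 2)
  have hvt₁ : 0 < v t₁ ^ 2 := pow_pos (hpos₀ t₁ ht₀₁) 2
  have hμ : 0 < μ := lt_min (by linarith) (div_pos hd₁ hvt₁)
  have hcoef : 0 < B + C * μ - 2 * μ ^ 2 := by
    rw [hfac]
    have : μ ≤ p / 2 := min_le_left _ _
    have : 0 < p - μ := by linarith
    have : 0 < μ - q := by linarith
    positivity
  have hμ₁ : μ * v t₁ ^ 2 ≤ deriv v t₁ := (le_div_iff₀ hvt₁).1 (min_le_right _ _)
  have hric : ∀ t ∈ Ici t₁, μ * v t ^ 2 ≤ deriv v t := by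
    intro t ht
    rcases (mem_Ici.1 ht).eq_or_lt with rfl | hlt
    · exact hμ₁
    · exact (h.mul_sq_lt_deriv hcoef hpos₁ hμ₁ hlt).le
  obtain ⟨t, ht, hvt⟩ := exists_nonpos_of_mul_sq_le_deriv hμ h.differentiable hric
  exact (hpos₀ t (ht₀₁.trans_le ht)).not_ge hvt

theorem nonpos (h : IsGlobalSolution_s7 C B v) (hB : 0 < B) (t : ℝ) : v t ≤ 0 := by
  by_contra! hpos
  have hd := h.deriv_neg_of_pos hB hpos
  have hd' := h.comp_neg.deriv_neg_of_pos hB (t₀ := -t) (by simpa using hpos)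
  rw [deriv_comp_neg, neg_neg] at hd'
  linarith

theorem eq_zero (h : IsGlobalSolution_s7 C B v) (hB : 0 < B) (t : ℝ) : v t = 0 :=
  le_antisymm (h.nonpos hB t) (by simpa using h.neg.nonpos hB t)

end IsGlobalSolution_s7

theorem stmt_7_general (A B : ℝ) (hB : 0 < B)
    (u : ℝ → ℝ) (hu : Differentiable ℝ u) (hu' : Differentiable ℝ (deriv u))
    (hode : ∀ t, deriv (deriv u) t = A * u t * deriv u t + B * (u t) ^ 3) :
    ∀ t, u t = 0 :=
  IsGlobalSolution_s7.eq_zero ⟨hu, hu', hode⟩ hB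

/-- A > 0, B > 0: any global solution of u'' = A u u' + B u³ with u'(0) ≥ 0
is identically zero. -/
theorem stmt_7 (A B : ℝ) (hA : 0 < A) (hB : 0 < B)
    (u : ℝ → ℝ) (hu : Differentiable ℝ u) (hu' : Differentiable ℝ (deriv u))
    (hode : ∀ t, deriv (deriv u) t = A * u t * deriv u t + B * (u t) ^ 3)
    (hinit : 0 ≤ deriv u 0) :
    ∀ t, u t = 0 :=
  stmt_7_general A B hB u hu hu' hode
end

section
/- Let A > 0 and B > 0 be real constants, and let k₊ = (−A + √(A² + 8B))/4 be the positive root of 2k² + A·k − B = 0. Then there is no twice differentiable function u : ℝ → ℝ satisfying u''(t) = A·u(t)·u'(t) + B·u(t)³ for all t ∈ ℝ with u'(0) < 0 and u'(0) + k₊·u(0)² ≤ 0; that is, every such solution blows up in finite time. -/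
/-!
With `k = k₊`, the identity `B = k (A + 2k)` turns (7.1) into the linear equation
`g' = (A + 2k) u g` for `g = u' + k u²`. Hence `g` keeps the sign of `g(0) ≤ 0`, i.e.
`u' ≤ -k u²` on all of `ℝ`. A global solution of this Riccati inequality with `k > 0` must
vanish identically (otherwise `1/u` would grow at least like `k t` backwards from a point where
`u > 0`, forcing a pole), which contradicts `u'(0) < 0`.
-/

open Real Set

/-- The quantity `g_k(u) = u' + k u²` of the paper. -/
noncomputable def riccatiGauge (k : ℝ) (u : ℝ → ℝ) (t : ℝ) : ℝ :=
  deriv u t + k * u t ^ 2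

lemma posRoot_pos {A B : ℝ} (hB : 0 < B) : 0 < (-A + √(A ^ 2 + 8 * B)) / 4 := by
  have hsq : √(A ^ 2 + 8 * B) ^ 2 = A ^ 2 + 8 * B := sq_sqrt (by positivity)
  nlinarith [sqrt_nonneg (A ^ 2 + 8 * B), sq_abs A, abs_nonneg A, le_abs_self A]

lemma posRoot_isRoot (A B : ℝ) (hB : 0 < B) :
    B = (-A + √(A ^ 2 + 8 * B)) / 4 * (A + 2 * ((-A + √(A ^ 2 + 8 * B)) / 4)) := by
  have hsq : √(A ^ 2 + 8 * B) ^ 2 = A ^ 2 + 8 * B := sq_sqrt (by positivity)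
  nlinarith

lemma hasDerivAt_riccatiGauge {A B k : ℝ} (hB : B = k * (A + 2 * k)) {u : ℝ → ℝ}
    (hu : Differentiable ℝ u) (hu' : Differentiable ℝ (deriv u))
    (hode : ∀ t, deriv (deriv u) t = A * u t * deriv u t + B * u t ^ 3) (t : ℝ) :
    HasDerivAt (riccatiGauge k u) ((A + 2 * k) * u t * riccatiGauge k u t) t := by
  have h := (hu' t).hasDerivAt.fun_add (((hu t).hasDerivAt.fun_pow 2).const_mul k)
  exact h.congr_deriv (by rw [hode, riccatiGauge, hB]; push_cast; ring)

lemma eq_mul_exp_integral_of_hasDerivAt {a g : ℝ → ℝ} (ha : Continuous a)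
    (hg : ∀ t, HasDerivAt g (a t * g t) t) (t : ℝ) :
    g t = g 0 * exp (∫ s in (0 : ℝ)..t, a s) := by
  set F : ℝ → ℝ := fun t => ∫ s in (0 : ℝ)..t, a s
  have hF : ∀ t, HasDerivAt F (a t) t := fun t => (ha.integral_hasStrictDerivAt 0 t).hasDerivAt
  have hH : ∀ t, HasDerivAt (fun t => g t * exp (-F t)) 0 t := fun t =>
    ((hg t).mul (hF t).neg.exp).congr_deriv (by ring)
  have hconst := is_const_of_deriv_eq_zero (fun t => (hH t).differentiableAt)
    (fun t => (hH t).deriv) t 0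
  simp only [F, intervalIntegral.integral_same, neg_zero, exp_zero, mul_one] at hconst
  rw [← hconst, mul_assoc, ← exp_add, neg_add_cancel, exp_zero, mul_one]

section RiccatiInequality

variable {k : ℝ} {u : ℝ → ℝ}

lemma nonpos_of_deriv_le_neg_mul_sq (hk : 0 < k) (hu : Differentiable ℝ u)
    (h : ∀ t, deriv u t ≤ -(k * u t ^ 2)) (t₀ : ℝ) : u t₀ ≤ 0 := by
  by_contra! h₀
  have hanti : Antitone u :=
    antitone_of_deriv_nonpos hu fun t => (h t).trans (by nlinarith [sq_nonneg (u t)])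
  have hpos : ∀ t ≤ t₀, 0 < u t := fun t ht => h₀.trans_le (hanti ht)
  -- `(1/u)' = -u'/u² ≥ k` wherever `u > 0`
  have hmono : MonotoneOn (fun t => (u t)⁻¹ - k * t) (Iic t₀) := by
    refine monotoneOn_of_hasDerivWithinAt_nonneg (f' := fun t => -deriv u t / u t ^ 2 - k)
      (convex_Iic t₀)
      ((hu.continuous.continuousOn.inv₀ fun t ht => (hpos t ht).ne').sub (by fun_prop))
      (fun t ht => ?_) (fun t ht => ?_)
    · rw [interior_Iic] at ht
      exact (((hu t).hasDerivAt.fun_inv (hpos t ht.le).ne').fun_sub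
        ((hasDerivAt_id' t).const_mul k)).hasDerivWithinAt.congr_deriv (by rw [mul_one])
    · rw [interior_Iic] at ht
      have hsq : 0 < u t ^ 2 := pow_pos (hpos t ht.le) 2
      rw [sub_nonneg, le_div_iff₀ hsq]
      linarith [h t]
  set t := t₀ - (k * u t₀)⁻¹
  have ht : t ≤ t₀ := sub_le_self _ (by positivity)
  have key := hmono ht self_mem_Iic ht
  have hkt : k * t = k * t₀ - (u t₀)⁻¹ := by
    simp only [t]
    field_simp
  simp only [hkt] at key
  linarith [inv_pos.2 (hpos t ht)]

lemma reflect_of_deriv_le_neg_mul_sq (hu : Differentiable ℝ u)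
    (h : ∀ t, deriv u t ≤ -(k * u t ^ 2)) (t : ℝ) :
    HasDerivAt (fun t => -u (-t)) (deriv u (-t)) t ∧
      deriv u (-t) ≤ -(k * (-u (-t)) ^ 2) := by
  refine ⟨?_, by simpa using h (-t)⟩
  simpa using ((hu (-t)).hasDerivAt.comp t (hasDerivAt_neg t)).fun_neg

lemma eq_zero_of_deriv_le_neg_mul_sq (hk : 0 < k) (hu : Differentiable ℝ u)
    (h : ∀ t, deriv u t ≤ -(k * u t ^ 2)) : u = 0 := by
  have hrefl := reflect_of_deriv_le_neg_mul_sq hu h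
  have hv := nonpos_of_deriv_le_neg_mul_sq hk (fun t => (hrefl t).1.differentiableAt)
    (fun t => (hrefl t).1.deriv ▸ (hrefl t).2)
  funext t
  exact le_antisymm (nonpos_of_deriv_le_neg_mul_sq hk hu h t) (by simpa using hv (-t))

end RiccatiInequality

theorem stmt_8_general (A B : ℝ) (hB : 0 < B)
    (kp : ℝ) (hkp : kp = (-A + Real.sqrt (A ^ 2 + 8 * B)) / 4) :
    ¬ ∃ u : ℝ → ℝ, Differentiable ℝ u ∧ Differentiable ℝ (deriv u) ∧
      (∀ t, deriv (deriv u) t = A * u t * deriv u t + B * (u t) ^ 3) ∧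
      deriv u 0 < 0 ∧ deriv u 0 + kp * (u 0) ^ 2 ≤ 0 := by
  rintro ⟨u, hu, hu', hode, hneg, hg0⟩
  subst hkp
  have hgauge := hasDerivAt_riccatiGauge (posRoot_isRoot A B hB) hu hu' hode
  have hle : ∀ t, deriv u t ≤ -((-A + √(A ^ 2 + 8 * B)) / 4 * u t ^ 2) := fun t => by
    have hg := eq_mul_exp_integral_of_hasDerivAt (continuous_const.mul hu.continuous) hgauge t
    have : riccatiGauge _ u t ≤ 0 := hg ▸ mul_nonpos_of_nonpos_of_nonneg hg0 (exp_pos _).le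
    rw [riccatiGauge] at this
    linarith
  rw [eq_zero_of_deriv_le_neg_mul_sq (posRoot_pos hB) hu hle] at hneg
  simp at hneg

/-- A > 0, B > 0: no global solution with u'(0) < 0 and g_{k₊}(u(0)) ≤ 0. -/
theorem stmt_8 (A B : ℝ) (hA : 0 < A) (hB : 0 < B)
    (kp : ℝ) (hkp : kp = (-A + Real.sqrt (A ^ 2 + 8 * B)) / 4) :
    ¬ ∃ u : ℝ → ℝ, Differentiable ℝ u ∧ Differentiable ℝ (deriv u) ∧
      (∀ t, deriv (deriv u) t = A * u t * deriv u t + B * (u t) ^ 3) ∧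
      deriv u 0 < 0 ∧ deriv u 0 + kp * (u 0) ^ 2 ≤ 0 :=
  stmt_8_general A B hB kp hkp
end

section
/- For all real constants a > 0, b and c, the function f(x) = a / cosh(b·x + c) is a positive global solution on ℝ of the equation f²·f''' − 5·f·f'·f'' + 4·f'³ = 0 (equation (1.1) with m = 4), and f is non-constant whenever b ≠ 0. -/
/-!
Write `f' = g f`. Then `f² f''' − 5 f f' f'' + 4 f'³ = f³ (g'' − 2 g g')`, so the equation holds as
soon as `g` solves a Riccati equation `g' = g² − k` with constant `k`. For `f = a / cosh (b x + c)`
the logarithmic derivative is `g = −b tanh (b x + c)`, which satisfies `g' = g² − b²`.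
-/

open Real

theorem Real.hasDerivAt_tanh (x : ℝ) : HasDerivAt tanh (1 - tanh x ^ 2) x := by
  have hc := (cosh_pos x).ne'
  have h := (hasDerivAt_sinh x).div (hasDerivAt_cosh x) hc
  rw [show sinh / cosh = tanh from funext fun y => (tanh_eq_sinh_div_cosh y).symm] at h
  refine h.congr_deriv ?_
  rw [tanh_eq_sinh_div_cosh]
  field_simp

namespace RiccatiLogDeriv

variable {f g : ℝ → ℝ} {k : ℝ}
  (hf : ∀ x, HasDerivAt f (g x * f x) x) (hg : ∀ x, HasDerivAt g (g x ^ 2 - k) x)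
include hf

theorem deriv_eq : deriv f = fun x => g x * f x :=
  funext fun x => (hf x).deriv

include hg

theorem hasDerivAt_deriv (x : ℝ) :
    HasDerivAt (deriv f) ((2 * g x ^ 2 - k) * f x) x := by
  rw [deriv_eq hf]
  exact ((hg x).mul (hf x)).congr_deriv (by ring)

theorem deriv_deriv_eq : deriv (deriv f) = fun x => (2 * g x ^ 2 - k) * f x :=
  funext fun x => (hasDerivAt_deriv hf hg x).deriv

theorem hasDerivAt_deriv_deriv (x : ℝ) :
    HasDerivAt (deriv (deriv f)) ((6 * g x ^ 3 - 5 * k * g x) * f x) x := by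
  rw [deriv_deriv_eq hf hg]
  refine ((((hg x).pow 2).const_mul 2).sub_const k).mul (hf x) |>.congr_deriv ?_
  simp only [Pi.pow_apply]
  ring

theorem sq_mul_deriv3_sub_five_mul_add_four_mul_cube_eq_zero (x : ℝ) :
    f x ^ 2 * deriv (deriv (deriv f)) x - 5 * f x * deriv f x * deriv (deriv f) x
      + 4 * deriv f x ^ 3 = 0 := by
  rw [(hasDerivAt_deriv_deriv hf hg x).deriv, deriv_deriv_eq hf hg, deriv_eq hf]
  ring

end RiccatiLogDeriv

section SechProfile

variable (a b c : ℝ)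

theorem hasDerivAt_affine (x : ℝ) : HasDerivAt (fun y => b * y + c) b x := by
  simpa using ((hasDerivAt_id x).const_mul b).add_const c

theorem hasDerivAt_div_cosh_affine (x : ℝ) :
    HasDerivAt (fun y => a / cosh (b * y + c))
      (-b * tanh (b * x + c) * (a / cosh (b * x + c))) x := by
  have hu := hasDerivAt_affine b c x
  refine ((hasDerivAt_const x a).div hu.cosh (cosh_pos _).ne').congr_deriv ?_
  rw [tanh_eq_sinh_div_cosh]
  field_simp
  ring

theorem hasDerivAt_neg_mul_tanh_affine (x : ℝ) :
    HasDerivAt (fun y => -b * tanh (b * y + c)) ((-b * tanh (b * x + c)) ^ 2 - b ^ 2) x := by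
  have hu := hasDerivAt_affine b c x
  exact (((hasDerivAt_tanh _).comp x hu).const_mul (-b)).congr_deriv (by ring)

end SechProfile

theorem exists_div_cosh_affine_ne {a b : ℝ} (c : ℝ) (ha : 0 < a) (hb : b ≠ 0) :
    ∃ x y : ℝ, a / cosh (b * x + c) ≠ a / cosh (b * y + c) := by
  refine ⟨-c / b, (1 - c) / b, ?_⟩
  have h₀ : b * (-c / b) + c = 0 := by field_simp; ring
  have h₁ : b * ((1 - c) / b) + c = 1 := by field_simp; ring
  rw [h₀, h₁, cosh_zero, div_one]
  exact (div_lt_self ha (one_lt_cosh.mpr one_ne_zero)).ne'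

/-- f(x) = a / cosh(bx + c), a > 0, is a positive global solution of
equation (1.1) with m = 4, non-constant whenever b ≠ 0. -/
theorem stmt_14 (a b c : ℝ) (ha : 0 < a) :
    (∀ x, 0 < a / Real.cosh (b * x + c)) ∧
    Differentiable ℝ (fun x => a / Real.cosh (b * x + c)) ∧
    Differentiable ℝ (deriv (fun x => a / Real.cosh (b * x + c))) ∧
    Differentiable ℝ (deriv (deriv (fun x => a / Real.cosh (b * x + c)))) ∧
    (∀ x, (a / Real.cosh (b * x + c)) ^ 2
        * deriv (deriv (deriv (fun y => a / Real.cosh (b * y + c)))) x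
      - 5 * (a / Real.cosh (b * x + c))
        * deriv (fun y => a / Real.cosh (b * y + c)) x
        * deriv (deriv (fun y => a / Real.cosh (b * y + c))) x
      + 4 * (deriv (fun y => a / Real.cosh (b * y + c)) x) ^ 3 = 0) ∧
    (b ≠ 0 → ∃ x y : ℝ, a / Real.cosh (b * x + c) ≠ a / Real.cosh (b * y + c)) := by
  have hf := hasDerivAt_div_cosh_affine a b c
  have hg := hasDerivAt_neg_mul_tanh_affine b c
  exact ⟨fun x => div_pos ha (cosh_pos _),
    fun x => (hf x).differentiableAt,
    fun x => (RiccatiLogDeriv.hasDerivAt_deriv hf hg x).differentiableAt,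
    fun x => (RiccatiLogDeriv.hasDerivAt_deriv_deriv hf hg x).differentiableAt,
    RiccatiLogDeriv.sq_mul_deriv3_sub_five_mul_add_four_mul_cube_eq_zero hf hg,
    exists_div_cosh_affine_ne c ha⟩
end

section
/- Let A > 0 and B < 0 be real constants with A² + 8B ≥ 0, and let k₁ = (−A + √(A² + 8B))/4 be the larger real root of 2k² + A·k − B = 0 (so k₂ ≤ k₁ < 0). Let a ≤ 0 and β ≥ 0 be reals with β + k₁·a² < 0. Then there exists a twice differentiable function u : [0,∞) → ℝ satisfying u''(t) = A·u(t)·u'(t) + B·u(t)³ for all t ≥ 0, u(0) = a, u'(0) = β, and moreover u(t) → 0 and u'(t) → 0 as t → ∞. -/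
/-!
With `A = -2(k₁ + k₂)` and `B = -2k₁k₂`, the function `w = u' + k₁u²` satisfies `w' = -2k₂uw`.
In the new time `τ` with `dτ/dt = -u`, the pair `(v, w) = (u², u' + k₁u²)` therefore solves the
linear system `v' = 2k₁v - 2w`, `w' = 2k₂w`. Its explicit solution with `v(0) = a²` and
`w(0) = β + k₁a² < 0` has `v > 0` and `v, w → 0`. Going back to `t` means solving
`dτ/dt = √(v(τ))`, which has a global increasing solution because `v` is bounded. Then `u = -√v`
solves the equation, and `u' = w - k₁v` tends to `0`.
-/

open Filter Set Real Topology

lemma integral_exp_mul_nonneg (c : ℝ) {τ : ℝ} (hτ : 0 ≤ τ) :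
    0 ≤ ∫ s in (0:ℝ)..τ, exp (c * s) :=
  intervalIntegral.integral_nonneg hτ fun _ _ => (exp_pos _).le

lemma integral_exp_mul_le {c τ : ℝ} (hc : c ≤ 0) (hτ : 0 ≤ τ) :
    ∫ s in (0:ℝ)..τ, exp (c * s) ≤ τ := by
  calc ∫ s in (0:ℝ)..τ, exp (c * s) ≤ ∫ _ in (0:ℝ)..τ, (1:ℝ) :=
        intervalIntegral.integral_mono_on hτ
          ((by fun_prop : Continuous fun s => exp (c * s)).intervalIntegrable _ _)
          intervalIntegrable_const
          fun s hs => exp_le_one_iff.2 (mul_nonpos_of_nonpos_of_nonneg hc hs.1)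
    _ = τ := by simp

lemma tendsto_exp_mul_mul_add_mul {c : ℝ} (hc : c < 0) (a b : ℝ) :
    Tendsto (fun τ => exp (c * τ) * (a + b * τ)) atTop (𝓝 0) := by
  have h : Tendsto (fun x => a * exp (-x) + b / -c * (x ^ 1 * exp (-x))) atTop (𝓝 0) := by
    simpa using (tendsto_exp_neg_atTop_nhds_zero.const_mul a).add
      ((tendsto_pow_mul_exp_neg_atTop_nhds_zero 1).const_mul (b / -c))
  refine (h.comp (tendsto_id.const_mul_atTop (neg_pos.2 hc))).congr fun τ => ?_
  simp only [Function.comp_apply, id, pow_one, neg_mul, neg_neg]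
  field_simp [hc.ne]

lemma bddAbove_image_Ici_of_tendsto {f : ℝ → ℝ} (hf : Continuous f) {l : ℝ}
    (h : Tendsto f atTop (𝓝 l)) (a : ℝ) : BddAbove (f '' Ici a) := by
  obtain ⟨N, hN⟩ := eventually_atTop.1 (h.eventually (eventually_le_nhds (lt_add_one l)))
  have hsplit : Ici a ⊆ Icc a N ∪ Ici N := fun x hx =>
    (le_total x N).elim (fun hxN => Or.inl ⟨hx, hxN⟩) Or.inr
  refine (((isCompact_Icc (a := a) (b := N)).bddAbove_image hf.continuousOn).union
    (t := f '' Ici N) ⟨l + 1, ?_⟩).mono ?_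
  · rintro _ ⟨x, hx, rfl⟩
    exact hN x hx
  · rw [← image_union]
    exact image_mono hsplit

/-- The inverse of `τ ↦ ∫₀^τ 1/g` solves `θ' = g(θ)`; the bound `g ≤ C` makes the integral
tend to `±∞`, so that the inverse is defined on all of `ℝ`. -/
theorem exists_monotone_hasDerivAt_comp {g : ℝ → ℝ} {C : ℝ} (hg : Continuous g)
    (hpos : ∀ x, 0 < g x) (hC : ∀ x, g x ≤ C) :
    ∃ θ : ℝ → ℝ, θ 0 = 0 ∧ Monotone θ ∧ Tendsto θ atTop atTop ∧
      ∀ t, HasDerivAt θ (g (θ t)) t := by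
  have hC₀ : 0 < C := (hpos 0).trans_le (hC 0)
  have hinv : Continuous fun σ => (g σ)⁻¹ := hg.inv₀ fun σ => (hpos σ).ne'
  set T : ℝ → ℝ := fun τ => ∫ σ in (0:ℝ)..τ, (g σ)⁻¹
  have hT : ∀ τ, HasDerivAt T (g τ)⁻¹ τ := fun τ =>
    intervalIntegral.integral_hasDerivAt_right (hinv.intervalIntegrable _ _)
      (hinv.stronglyMeasurableAtFilter _ _) hinv.continuousAt
  have hT₀ : T 0 = 0 := intervalIntegral.integral_same
  have hTmono : StrictMono T := strictMono_of_hasDerivAt_pos hT fun τ => inv_pos.2 (hpos τ)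
  have hTlin : Monotone fun τ => T τ - τ / C :=
    monotone_of_hasDerivAt_nonneg (fun τ => (hT τ).sub ((hasDerivAt_id τ).div_const C))
      fun τ => sub_nonneg.2 (by simpa using inv_anti₀ (hpos τ) (hC τ))
  have htop : Tendsto T atTop atTop := by
    refine tendsto_atTop_mono' _ ?_ (tendsto_id.atTop_div_const hC₀)
    filter_upwards [eventually_ge_atTop 0] with τ hτ
    simpa [hT₀] using hTlin hτ
  have hbot : Tendsto T atBot atBot := by
    refine tendsto_atBot_mono' _ ?_ (tendsto_id.atBot_div_const hC₀)
    filter_upwards [eventually_le_atBot 0] with τ hτ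
    simpa [hT₀] using hTlin hτ
  set Φ := hTmono.orderIsoOfSurjective T
    ((continuous_iff_continuousAt.2 fun τ => (hT τ).continuousAt).surjective htop hbot)
  refine ⟨Φ.symm, ?_, Φ.symm.monotone, Φ.symm.tendsto_atTop, fun t => ?_⟩
  · rw [OrderIso.symm_apply_eq]
    exact hT₀.symm
  · simpa using HasDerivAt.of_local_left_inverse Φ.symm.continuous.continuousAt (hT _)
      (inv_ne_zero (hpos _).ne') (Eventually.of_forall Φ.apply_symm_apply)

section LinearSystem

variable (k₁ k₂ v₀ w₀ : ℝ)

/-- `vSol`, `wSol` solve `v' = 2k₁v - 2w`, `w' = 2k₂w` with initial values `v₀`, `w₀`. -/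
noncomputable def vSol (τ : ℝ) : ℝ :=
  exp (2 * k₁ * τ) * (v₀ - 2 * w₀ * ∫ s in (0:ℝ)..τ, exp (2 * (k₂ - k₁) * s))

noncomputable def wSol (τ : ℝ) : ℝ := w₀ * exp (2 * k₂ * τ)

lemma vSol_zero : vSol k₁ k₂ v₀ w₀ 0 = v₀ := by
  simp [vSol]

lemma hasDerivAt_wSol (τ : ℝ) : HasDerivAt (wSol k₂ w₀) (2 * k₂ * wSol k₂ w₀ τ) τ := by
  have h : HasDerivAt (wSol k₂ w₀) _ τ := ((hasDerivAt_id τ).const_mul (2 * k₂)).exp.const_mul w₀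
  refine h.congr_deriv ?_
  simp only [wSol, id]
  ring

lemma hasDerivAt_vSol (τ : ℝ) :
    HasDerivAt (vSol k₁ k₂ v₀ w₀) (2 * k₁ * vSol k₁ k₂ v₀ w₀ τ - 2 * wSol k₂ w₀ τ) τ := by
  have hcont : Continuous fun s => exp (2 * (k₂ - k₁) * s) := by fun_prop
  have hE := intervalIntegral.integral_hasDerivAt_right (hcont.intervalIntegrable 0 τ)
    (hcont.stronglyMeasurableAtFilter _ _) hcont.continuousAt
  have h : HasDerivAt (vSol k₁ k₂ v₀ w₀) _ τ :=
    ((hasDerivAt_id τ).const_mul (2 * k₁)).exp.mul ((hE.const_mul (2 * w₀)).const_sub v₀)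
  refine h.congr_deriv ?_
  have hexp : exp (2 * k₁ * τ) * exp (2 * (k₂ - k₁) * τ) = exp (2 * k₂ * τ) := by
    rw [← exp_add]
    ring_nf
  simp only [vSol, wSol, id]
  linear_combination -2 * w₀ * hexp

lemma continuous_vSol : Continuous (vSol k₁ k₂ v₀ w₀) :=
  continuous_iff_continuousAt.2 fun τ => (hasDerivAt_vSol k₁ k₂ v₀ w₀ τ).continuousAt

variable {k₁ k₂ v₀ w₀}

lemma vSol_pos (hv₀ : 0 < v₀) (hw₀ : w₀ < 0) {τ : ℝ} (hτ : 0 ≤ τ) :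
    0 < vSol k₁ k₂ v₀ w₀ τ := by
  have hE := integral_exp_mul_nonneg (2 * (k₂ - k₁)) hτ
  exact mul_pos (exp_pos _) (by nlinarith)

lemma vSol_le (hk : k₂ ≤ k₁) (hw₀ : w₀ ≤ 0) {τ : ℝ} (hτ : 0 ≤ τ) :
    vSol k₁ k₂ v₀ w₀ τ ≤ exp (2 * k₁ * τ) * (v₀ + -2 * w₀ * τ) := by
  have hE := integral_exp_mul_le (c := 2 * (k₂ - k₁)) (by linarith) hτ
  exact mul_le_mul_of_nonneg_left (by nlinarith) (exp_pos _).le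

lemma tendsto_vSol (hk : k₂ ≤ k₁) (hk₁ : k₁ < 0) (hv₀ : 0 < v₀) (hw₀ : w₀ < 0) :
    Tendsto (vSol k₁ k₂ v₀ w₀) atTop (𝓝 0) := by
  refine squeeze_zero' ?_ ?_ (tendsto_exp_mul_mul_add_mul (by linarith : 2 * k₁ < 0) v₀ (-2 * w₀))
  · filter_upwards [eventually_ge_atTop 0] with τ hτ using (vSol_pos hv₀ hw₀ hτ).le
  · filter_upwards [eventually_ge_atTop 0] with τ hτ using vSol_le hk hw₀.le hτ

lemma tendsto_wSol (hk₂ : k₂ < 0) : Tendsto (wSol k₂ w₀) atTop (𝓝 0) := by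
  unfold wSol
  simpa using ((tendsto_exp_atBot.comp
    (tendsto_id.const_mul_atTop_of_neg (by linarith : 2 * k₂ < 0))).const_mul w₀)

end LinearSystem

section TimeChange

variable {V W θ : ℝ → ℝ} {k₁ k₂ t : ℝ}

lemma hasDerivAt_neg_sqrt_comp (hV : HasDerivAt V (2 * k₁ * V (θ t) - 2 * W (θ t)) (θ t))
    (hθ : HasDerivAt θ √(V (θ t)) t) (hpos : 0 < V (θ t)) :
    HasDerivAt (fun t => -√(V (θ t))) (W (θ t) - k₁ * V (θ t)) t := by
  refine ((hV.comp t hθ).sqrt hpos.ne').neg.congr_deriv ?_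
  have hs : √(V (θ t)) ≠ 0 := (sqrt_pos.2 hpos).ne'
  simp only [Function.comp_apply]
  field_simp
  ring

lemma hasDerivAt_sub_mul_comp (hV : HasDerivAt V (2 * k₁ * V (θ t) - 2 * W (θ t)) (θ t))
    (hW : HasDerivAt W (2 * k₂ * W (θ t)) (θ t)) (hθ : HasDerivAt θ √(V (θ t)) t)
    (hnn : 0 ≤ V (θ t)) :
    HasDerivAt (fun t => W (θ t) - k₁ * V (θ t))
      (-2 * (k₁ + k₂) * -√(V (θ t)) * (W (θ t) - k₁ * V (θ t)) +
        -2 * (k₁ * k₂) * (-√(V (θ t))) ^ 3) t := by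
  refine ((hW.comp t hθ).sub ((hV.comp t hθ).const_mul k₁)).congr_deriv ?_
  linear_combination -2 * k₁ * k₂ * √(V (θ t)) * sq_sqrt hnn

end TimeChange

theorem exists_solution_of_factorization {A B k₁ k₂ a β : ℝ} (hA : A = -2 * (k₁ + k₂))
    (hB : B = -2 * (k₁ * k₂)) (hk : k₂ ≤ k₁) (hk₁ : k₁ < 0) (ha : a < 0)
    (hg : β + k₁ * a ^ 2 < 0) :
    ∃ u u' u'' : ℝ → ℝ,
      (∀ t ∈ Ici (0:ℝ), HasDerivWithinAt u (u' t) (Ici (0:ℝ)) t) ∧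
      (∀ t ∈ Ici (0:ℝ), HasDerivWithinAt u' (u'' t) (Ici (0:ℝ)) t) ∧
      (∀ t ∈ Ici (0:ℝ), u'' t = A * u t * u' t + B * (u t) ^ 3) ∧
      u 0 = a ∧ u' 0 = β ∧ Tendsto u atTop (𝓝 0) ∧ Tendsto u' atTop (𝓝 0) := by
  subst hA hB
  set v := vSol k₁ k₂ (a ^ 2) (β + k₁ * a ^ 2)
  set w := wSol k₂ (β + k₁ * a ^ 2)
  have hv₀ : 0 < a ^ 2 := sq_pos_of_neg ha
  have hv : Tendsto v atTop (𝓝 0) := tendsto_vSol hk hk₁ hv₀ hg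
  obtain ⟨C, hC⟩ := bddAbove_image_Ici_of_tendsto (continuous_vSol _ _ _ _) hv 0
  obtain ⟨θ, hθ₀, hθmono, hθtop, hθ⟩ := exists_monotone_hasDerivAt_comp
    -- `v` need not be positive at negative times, so the vector field is frozen there
    (g := fun σ => √(v (max σ 0))) (C := √C)
    ((continuous_vSol _ _ _ _).comp (continuous_id.max continuous_const)).sqrt
    (fun σ => sqrt_pos.2 (vSol_pos hv₀ hg (le_max_right σ 0)))
    (fun σ => sqrt_le_sqrt (hC ⟨max σ 0, le_max_right σ 0, rfl⟩))
  have hθnn : ∀ t ∈ Ici (0:ℝ), 0 ≤ θ t := fun t ht => hθ₀ ▸ hθmono ht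
  have hθ' : ∀ t ∈ Ici (0:ℝ), HasDerivAt θ √(v (θ t)) t := fun t ht => by
    simpa only [max_eq_left (hθnn t ht)] using hθ t
  refine ⟨fun t => -√(v (θ t)), fun t => w (θ t) - k₁ * v (θ t),
    fun t => -2 * (k₁ + k₂) * -√(v (θ t)) * (w (θ t) - k₁ * v (θ t)) +
      -2 * (k₁ * k₂) * (-√(v (θ t))) ^ 3,
    fun t ht => ?_, fun t ht => ?_, fun _ _ => rfl, ?_, ?_, ?_, ?_⟩
  · exact (hasDerivAt_neg_sqrt_comp (hasDerivAt_vSol _ _ _ _ _) (hθ' t ht)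
      (vSol_pos hv₀ hg (hθnn t ht))).hasDerivWithinAt
  · exact (hasDerivAt_sub_mul_comp (hasDerivAt_vSol _ _ _ _ _) (hasDerivAt_wSol _ _ _) (hθ' t ht)
      (vSol_pos hv₀ hg (hθnn t ht)).le).hasDerivWithinAt
  · simp [hθ₀, v, vSol_zero, sqrt_sq_eq_abs, abs_of_neg ha]
  · simp [hθ₀, v, w, vSol_zero, wSol]
  · simpa using (hv.comp hθtop).sqrt.neg
  · simpa using ((tendsto_wSol (hk.trans_lt hk₁)).comp hθtop).sub ((hv.comp hθtop).const_mul k₁)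

/-- A > 0, B < 0, A² + 8B ≥ 0: for initial data a ≤ 0, β ≥ 0 with
g_{k₁}(a, β) = β + k₁ a² < 0, there is a solution on [0, ∞) with
u(t) → 0 and u'(t) → 0 as t → ∞. -/
theorem stmt_16 (A B : ℝ) (hA : 0 < A) (hB : B < 0) (hdisc : 0 ≤ A ^ 2 + 8 * B)
    (k1 : ℝ) (hk1 : k1 = (-A + Real.sqrt (A ^ 2 + 8 * B)) / 4)
    (a β : ℝ) (ha : a ≤ 0) (hβ : 0 ≤ β) (hg : β + k1 * a ^ 2 < 0) :
    ∃ u u' u'' : ℝ → ℝ,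
      (∀ t ∈ Set.Ici (0:ℝ), HasDerivWithinAt u (u' t) (Set.Ici (0:ℝ)) t) ∧
      (∀ t ∈ Set.Ici (0:ℝ), HasDerivWithinAt u' (u'' t) (Set.Ici (0:ℝ)) t) ∧
      (∀ t ∈ Set.Ici (0:ℝ), u'' t = A * u t * u' t + B * (u t) ^ 3) ∧
      u 0 = a ∧ u' 0 = β ∧
      Filter.Tendsto u Filter.atTop (nhds 0) ∧
      Filter.Tendsto u' Filter.atTop (nhds 0) := by
  set s := √(A ^ 2 + 8 * B)
  have hs : s ^ 2 = A ^ 2 + 8 * B := sq_sqrt hdisc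
  have hsA : s < A := (sqrt_lt' hA).2 (by linarith)
  have ha' : a < 0 := ha.lt_of_ne (by rintro rfl; linarith)
  subst hk1
  exact exists_solution_of_factorization (k₂ := (-A - s) / 4) (by ring)
    (by linear_combination (-1 / 8 : ℝ) * hs) (by linarith [sqrt_nonneg (A ^ 2 + 8 * B)])
    (by linarith) ha' hg
end

section
/- Let A > 0 and B < 0 be real constants with A² + 8B ≥ 0. Then there exists a twice differentiable function u : ℝ → ℝ, not identically zero, satisfying u''(t) = A·u(t)·u'(t) + B·u(t)³ for all t ∈ ℝ, which is bounded and satisfies u(t) → 0 and u'(t) → 0 as t → +∞ and as t → −∞. -/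
/-!
The substitution `u = c W' / W`, with `A c = -p - 3` and `B c² - A c = 2`, turns
`u'' = A u u' + B u³` into the Emden–Fowler equation `W'' = W^(-p) / 2`: indeed `v = W'/W` and
`q = W''/W` satisfy `v' = q - v²` and `q' = -(p + 1) q v`. The discriminant condition provides
such a `c` with `p ≥ 0`.

The solution with `W(0) = 1`, `W'(0) = 0` is found by quadrature. Writing `W = 1 + s²`, the energy
identity `W'² = ∫₁^W x^(-p) dx` reads `W' = s √φ(s)` with `φ = meanRpow p`, and then
`dt/ds = 2 / √φ(s)`. As `0 < φ ≤ 1`, `s ↦ t` is an increasing bijection of `ℝ` with slope `≥ 2`, so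
`W → ∞` at both ends while `W'² ≤ W`; hence `u = c v` and `u' = c (q - v²)` tend to `0`.
-/

open Real Filter Set Topology MeasureTheory

/-- `s² * meanRpow p s = ∫₀^{s²} (1 + x)^(-p) dx`; the scaling `x = s² τ` keeps it smooth
at `s = 0`. -/
noncomputable def meanRpow (p s : ℝ) : ℝ := ∫ τ in (0 : ℝ)..1, (1 + s ^ 2 * τ) ^ (-p)

lemma continuousOn_one_add_sq_mul_rpow (s r : ℝ) :
    ContinuousOn (fun τ : ℝ => (1 + s ^ 2 * τ) ^ r) (Icc 0 1) :=
  (by fun_prop : Continuous fun τ : ℝ => 1 + s ^ 2 * τ).continuousOn.rpow_const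
    fun τ hτ => Or.inl (by have := hτ.1; positivity)

lemma hasDerivAt_one_add_sq_mul_rpow {τ : ℝ} (hτ : 0 ≤ τ) (p x : ℝ) :
    HasDerivAt (fun x => (1 + x ^ 2 * τ) ^ (-p))
      (-p * (2 * x * τ) * (1 + x ^ 2 * τ) ^ (-p - 1)) x :=
  ((((hasDerivAt_pow 2 x).mul_const τ).const_add 1).rpow_const (p := -p)
    (Or.inl (by positivity))).congr_deriv (by push_cast; ring)

lemma hasDerivAt_meanRpow {p : ℝ} (hp : 0 ≤ p) (s : ℝ) :
    HasDerivAt (meanRpow p)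
      (∫ τ in (0 : ℝ)..1, -p * (2 * s * τ) * (1 + s ^ 2 * τ) ^ (-p - 1)) s := by
  have hIoc : uIoc (0 : ℝ) 1 = Ioc 0 1 := uIoc_of_le zero_le_one
  refine (intervalIntegral.hasDerivAt_integral_of_dominated_loc_of_deriv_le
    (F := fun x τ => (1 + x ^ 2 * τ) ^ (-p))
    (bound := fun _ => p * (2 * (|s| + 1))) (Metric.ball_mem_nhds s one_pos)
    (Eventually.of_forall fun x => (by fun_prop : Measurable _).aestronglyMeasurable)
    ((continuousOn_one_add_sq_mul_rpow s _).intervalIntegrable_of_Icc zero_le_one)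
    (by fun_prop : Measurable _).aestronglyMeasurable ?_ intervalIntegrable_const
    (Eventually.of_forall fun τ hτ x _ =>
      hasDerivAt_one_add_sq_mul_rpow (hIoc ▸ hτ).1.le p x)).2
  refine Eventually.of_forall fun τ hτ x hx => ?_
  rw [hIoc] at hτ
  have hx : |x| ≤ |s| + 1 := by
    have := abs_sub_abs_le_abs_sub x s
    rw [Metric.mem_ball, Real.dist_eq] at hx
    linarith
  have hbase : 1 ≤ 1 + x ^ 2 * τ := by have := hτ.1.le; nlinarith [sq_nonneg x]
  have hpow : (1 + x ^ 2 * τ) ^ (-p - 1) ≤ 1 := rpow_le_one_of_one_le_of_nonpos hbase (by linarith)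
  calc ‖-p * (2 * x * τ) * (1 + x ^ 2 * τ) ^ (-p - 1)‖
      = p * (2 * |x| * τ) * (1 + x ^ 2 * τ) ^ (-p - 1) := by
        rw [Real.norm_eq_abs, abs_mul, abs_mul, abs_mul, abs_mul, abs_neg, abs_of_nonneg hp,
          abs_of_pos hτ.1, abs_of_pos (by positivity : (0 : ℝ) < (1 + x ^ 2 * τ) ^ (-p - 1))]
        norm_num
    _ ≤ p * (2 * (|s| + 1) * 1) * 1 := by gcongr; exacts [hτ.1.le, hτ.2]
    _ = p * (2 * (|s| + 1)) := by ring

lemma two_mul_meanRpow_add (p s : ℝ) :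
    2 * meanRpow p s + s * ∫ τ in (0 : ℝ)..1, -p * (2 * s * τ) * (1 + s ^ 2 * τ) ^ (-p - 1) =
      2 * (1 + s ^ 2) ^ (-p) := by
  have hint : IntervalIntegrable (fun τ => (1 + s ^ 2 * τ) ^ (-p)) volume 0 1 :=
    (continuousOn_one_add_sq_mul_rpow s _).intervalIntegrable_of_Icc zero_le_one
  have hint' : IntervalIntegrable (fun τ => -p * (2 * s * τ) * (1 + s ^ 2 * τ) ^ (-p - 1))
      volume 0 1 :=
    ((by fun_prop : Continuous fun τ : ℝ => -p * (2 * s * τ)).continuousOn.mul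
      (continuousOn_one_add_sq_mul_rpow s _)).intervalIntegrable_of_Icc zero_le_one
  have hderiv : ∀ τ ∈ uIcc (0 : ℝ) 1, HasDerivAt (fun τ => 2 * τ * (1 + s ^ 2 * τ) ^ (-p))
      (2 * (1 + s ^ 2 * τ) ^ (-p) + s * (-p * (2 * s * τ) * (1 + s ^ 2 * τ) ^ (-p - 1))) τ := by
    intro τ hτ
    rw [uIcc_of_le zero_le_one] at hτ
    have := hτ.1
    refine (((hasDerivAt_id τ).const_mul 2).mul
      ((((hasDerivAt_id τ).const_mul (s ^ 2)).const_add 1).rpow_const (p := -p)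
        (Or.inl (by simp only [id]; positivity)))).congr_deriv ?_
    simp only [id]
    ring
  rw [meanRpow, ← intervalIntegral.integral_const_mul, ← intervalIntegral.integral_const_mul,
    ← intervalIntegral.integral_add (hint.const_mul 2) (hint'.const_mul s),
    intervalIntegral.integral_eq_sub_of_hasDerivAt hderiv
      ((hint.const_mul 2).add (hint'.const_mul s))]
  norm_num

lemma meanRpow_pos (p s : ℝ) : 0 < meanRpow p s :=
  intervalIntegral.intervalIntegral_pos_of_pos_on
    ((continuousOn_one_add_sq_mul_rpow s _).intervalIntegrable_of_Icc zero_le_one)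
    (fun τ hτ => by have := hτ.1; positivity) zero_lt_one

lemma meanRpow_le_one {p : ℝ} (hp : 0 ≤ p) (s : ℝ) : meanRpow p s ≤ 1 := by
  have := intervalIntegral.integral_mono_on zero_le_one
    ((continuousOn_one_add_sq_mul_rpow s (-p)).intervalIntegrable_of_Icc zero_le_one)
    (intervalIntegrable_const (μ := volume)) fun τ hτ =>
      rpow_le_one_of_one_le_of_nonpos (by have := hτ.1; nlinarith [sq_nonneg s]) (neg_nonpos.2 hp)
  simpa [meanRpow] using this

lemma hasDerivAt_mul_sqrt_meanRpow {p : ℝ} (hp : 0 ≤ p) (s : ℝ) :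
    HasDerivAt (fun s => s * √(meanRpow p s)) ((1 + s ^ 2) ^ (-p) / √(meanRpow p s)) s := by
  have hφ := meanRpow_pos p s
  have hsqrt : √(meanRpow p s) ≠ 0 := (sqrt_pos.2 hφ).ne'
  obtain ⟨d, hd, key⟩ : ∃ d, HasDerivAt (meanRpow p) d s ∧
      2 * meanRpow p s + s * d = 2 * (1 + s ^ 2) ^ (-p) :=
    ⟨_, hasDerivAt_meanRpow hp s, two_mul_meanRpow_add p s⟩
  refine ((hasDerivAt_id s).mul (hd.sqrt hφ.ne')).congr_deriv ?_
  rw [eq_div_iff hsqrt]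
  field_simp
  rw [sq_sqrt hφ.le]
  simp only [id]
  linear_combination key

lemma exists_orderIso_hasDerivAt_symm {f f' : ℝ → ℝ} {a : ℝ} (ha : 0 < a)
    (hf : ∀ x, HasDerivAt f (f' x) x) (hf' : ∀ x, a ≤ f' x) :
    ∃ e : ℝ ≃o ℝ, ∀ t, HasDerivAt e.symm (f' (e.symm t))⁻¹ t := by
  have hmono : StrictMono f := strictMono_of_hasDerivAt_pos hf fun x => ha.trans_le (hf' x)
  have hlin : Monotone fun x => f x - a * x :=
    monotone_of_hasDerivAt_nonneg (fun x => (hf x).sub ((hasDerivAt_id x).const_mul a))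
      fun x => by simpa using hf' x
  have htop : Tendsto f atTop atTop :=
    tendsto_atTop_mono' _ (eventually_ge_atTop 0 |>.mono fun x hx => by
        have := hlin hx; simp only [mul_zero, sub_zero, id_eq] at this ⊢; linarith)
      ((tendsto_id.const_mul_atTop ha).atTop_add (tendsto_const_nhds (x := f 0)))
  have hbot : Tendsto f atBot atBot :=
    tendsto_atBot_mono' _ (eventually_le_atBot 0 |>.mono fun x hx => by
        have := hlin hx; simp only [mul_zero, sub_zero, id_eq] at this ⊢; linarith)
      ((tendsto_id.const_mul_atBot ha).atBot_add (tendsto_const_nhds (x := f 0)))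
  let e := hmono.orderIsoOfSurjective f
    ((continuous_iff_continuousAt.2 fun x => (hf x).continuousAt).surjective htop hbot)
  exact ⟨e, fun t => (hf (e.symm t)).of_local_left_inverse e.symm.continuous.continuousAt
    (ha.trans_le (hf' _)).ne' (Eventually.of_forall e.apply_symm_apply)⟩

lemma abs_le_one_add_sq (x : ℝ) : |x| ≤ 1 + x ^ 2 := by
  nlinarith [sq_nonneg (|x| - 1), sq_abs x]

theorem exists_emdenFowler_solution {p : ℝ} (hp : 0 ≤ p) :
    ∃ W V : ℝ → ℝ, (∀ t, 1 ≤ W t) ∧ (∀ t, V t ^ 2 ≤ W t) ∧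
      (∀ t, HasDerivAt W (V t) t) ∧ (∀ t, HasDerivAt V (2⁻¹ * W t ^ (-p)) t) ∧
      Tendsto W atTop atTop ∧ Tendsto W atBot atTop := by
  set g : ℝ → ℝ := fun s => √(meanRpow p s) with hg
  have hg_pos : ∀ s, 0 < g s := fun s => sqrt_pos.2 (meanRpow_pos p s)
  have hg_le : ∀ s, g s ≤ 1 := fun s => sqrt_le_one.2 (meanRpow_le_one hp s)
  have hg_cont : Continuous fun s => 2 / g s :=
    continuous_const.div (continuous_iff_continuousAt.2 fun s =>
      (hasDerivAt_meanRpow hp s).continuousAt).sqrt fun s => (hg_pos s).ne'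
  obtain ⟨e, he⟩ := exists_orderIso_hasDerivAt_symm two_pos
    (fun s => (hg_cont.integral_hasStrictDerivAt 0 s).hasDerivAt)
    fun s => (le_div_iff₀ (hg_pos s)).2 (by nlinarith [hg_le s])
  refine ⟨fun t => 1 + e.symm t ^ 2, fun t => e.symm t * g (e.symm t), fun t => ?_, fun t => ?_,
    fun t => ?_, fun t => ?_, ?_, ?_⟩
  · nlinarith [sq_nonneg (e.symm t)]
  · have := meanRpow_le_one hp (e.symm t)
    rw [mul_pow, hg, sq_sqrt (meanRpow_pos p _).le]
    nlinarith [sq_nonneg (e.symm t)]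
  · refine (((he t).pow 2).const_add 1).congr_deriv ?_
    field_simp [(hg_pos (e.symm t)).ne']
    ring
  · refine ((hasDerivAt_mul_sqrt_meanRpow hp (e.symm t)).comp t (he t)).congr_deriv ?_
    field_simp [(hg_pos (e.symm t)).ne']
    exact div_self (hg_pos _).ne'
  · exact tendsto_atTop_mono (fun t => abs_le_one_add_sq (e.symm t))
      (tendsto_abs_atTop_atTop.comp e.symm.tendsto_atTop)
  · exact tendsto_atTop_mono (fun t => abs_le_one_add_sq (e.symm t))
      (tendsto_abs_atBot_atTop.comp e.symm.tendsto_atBot)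

lemma HasDerivAt.rpow_const_of_pos {f : ℝ → ℝ} {f' x : ℝ} (hf : HasDerivAt f f' x)
    (hx : 0 < f x) (r : ℝ) : HasDerivAt (fun y => f y ^ r) (r * f x ^ r * (f' / f x)) x :=
  (hf.rpow_const (Or.inl hx.ne')).congr_deriv (by rw [rpow_sub_one hx.ne']; ring)

lemma hasDerivAt_div_of_hasDerivAt_rpow {W V : ℝ → ℝ} {κ p t : ℝ} (hpos : 0 < W t)
    (hW : HasDerivAt W (V t) t) (hV : HasDerivAt V (κ * W t ^ (-p)) t) :
    HasDerivAt (fun t => V t / W t) (κ * W t ^ (-p - 1) - (V t / W t) ^ 2) t :=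
  (hV.div hW hpos.ne').congr_deriv (by rw [rpow_sub_one hpos.ne']; field_simp)

lemma hasDerivAt_riccati {v q : ℝ → ℝ} {A B c p t : ℝ} (hAc : A * c = -p - 3)
    (hBc : B * c ^ 2 - A * c = 2) (hv : HasDerivAt v (q t - v t ^ 2) t)
    (hq : HasDerivAt q ((-p - 1) * q t * v t) t) :
    HasDerivAt (fun t => c * (q t - v t ^ 2))
      (A * (c * v t) * (c * (q t - v t ^ 2)) + B * (c * v t) ^ 3) t :=
  ((hq.sub (hv.pow 2)).const_mul c).congr_deriv (by
    push_cast
    linear_combination (-(c * q t * v t)) * hAc - (c * v t ^ 3) * hBc)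

lemma exists_ne_zero_of_hasDerivAt {f : ℝ → ℝ} {d x : ℝ} (hf : HasDerivAt f d x) (hd : d ≠ 0) :
    ∃ y, f y ≠ 0 := by
  by_contra! h
  exact hd (hf.unique ((hasDerivAt_const x 0).congr_of_eventuallyEq (Eventually.of_forall h)))

lemma abs_div_le_one_of_sq_le {V W : ℝ} (hV : V ^ 2 ≤ W) (hW : 1 ≤ W) : |V / W| ≤ 1 := by
  rw [abs_div, abs_of_pos (by linarith : 0 < W), div_le_one (by linarith)]
  exact abs_le_of_sq_le_sq (by nlinarith) (by linarith)

lemma tendsto_div_of_sq_le {α : Type*} {l : Filter α} {W V : α → ℝ} (hV : ∀ x, V x ^ 2 ≤ W x)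
    (hW : Tendsto W l atTop) : Tendsto (fun x => V x / W x) l (𝓝 0) := by
  refine squeeze_zero_norm' ?_ (tendsto_inv_atTop_zero.comp (tendsto_sqrt_atTop.comp hW))
  filter_upwards [hW.eventually_gt_atTop 0] with x hx
  show |V x / W x| ≤ (√(W x))⁻¹
  rw [abs_div, abs_of_pos hx, ← one_div, ← sqrt_div_self']
  exact div_le_div_of_nonneg_right (abs_le_sqrt (hV x)) hx.le

lemma exists_root_of_discrim_nonneg {A B : ℝ} (hA : 0 < A) (hB : B < 0)
    (hdisc : 0 ≤ A ^ 2 + 8 * B) : ∃ c, A * c ≤ -3 ∧ B * c ^ 2 - A * c = 2 := by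
  obtain ⟨D, hD0, hD⟩ : ∃ D : ℝ, 0 ≤ D ∧ D ^ 2 = A ^ 2 + 8 * B := ⟨_, sqrt_nonneg _, sq_sqrt hdisc⟩
  refine ⟨(A + D) / (2 * B), ?_, ?_⟩
  · rw [mul_div_assoc', div_le_iff_of_neg (by linarith)]
    nlinarith
  · field_simp [hB.ne]
    linear_combination hD

/-- A > 0, B < 0, A² + 8B ≥ 0: existence of a non-trivial bounded global
solution of u'' = A u u' + B u³ tending to 0 (with its derivative)
at both ±∞. -/
theorem stmt_17 (A B : ℝ) (hA : 0 < A) (hB : B < 0) (hdisc : 0 ≤ A ^ 2 + 8 * B) :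
    ∃ u : ℝ → ℝ, Differentiable ℝ u ∧ Differentiable ℝ (deriv u) ∧
      (∀ t, deriv (deriv u) t = A * u t * deriv u t + B * (u t) ^ 3) ∧
      (∃ t, u t ≠ 0) ∧
      (∃ M : ℝ, ∀ t, |u t| ≤ M) ∧
      Filter.Tendsto u Filter.atTop (nhds 0) ∧
      Filter.Tendsto u Filter.atBot (nhds 0) ∧
      Filter.Tendsto (deriv u) Filter.atTop (nhds 0) ∧
      Filter.Tendsto (deriv u) Filter.atBot (nhds 0) := by
  obtain ⟨c, hc3, hc⟩ := exists_root_of_discrim_nonneg hA hB hdisc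
  obtain ⟨p, hp, hAc⟩ : ∃ p : ℝ, 0 ≤ p ∧ A * c = -p - 3 := ⟨-A * c - 3, by linarith, by ring⟩
  obtain ⟨W, V, hW1, hVW, hW, hV, hW_top, hW_bot⟩ := exists_emdenFowler_solution hp
  have hWpos : ∀ t, 0 < W t := fun t => one_pos.trans_le (hW1 t)
  set v := fun t => V t / W t
  set q := fun t => 2⁻¹ * W t ^ (-p - 1)
  have hv : ∀ t, HasDerivAt v (q t - v t ^ 2) t := fun t =>
    hasDerivAt_div_of_hasDerivAt_rpow (hWpos t) (hW t) (hV t)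
  have hu' : ∀ t, HasDerivAt (fun t => c * (q t - v t ^ 2))
      (A * (c * v t) * (c * (q t - v t ^ 2)) + B * (c * v t) ^ 3) t := fun t =>
    hasDerivAt_riccati hAc hc (hv t)
      ((((hW t).rpow_const_of_pos (hWpos t) _).const_mul 2⁻¹).congr_deriv
        (by simp only [q, v]; ring))
  have hu : deriv (fun t => c * v t) = fun t => c * (q t - v t ^ 2) :=
    funext fun t => ((hv t).const_mul c).deriv
  have hlim {l : Filter ℝ} (hl : Tendsto W l atTop) :
      Tendsto (fun t => c * v t) l (𝓝 0) ∧ Tendsto (fun t => c * (q t - v t ^ 2)) l (𝓝 0) := by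
    have hv0 := tendsto_div_of_sq_le hVW hl
    have hq0 := ((tendsto_rpow_neg_atTop (by linarith : 0 < p + 1)).comp hl).const_mul 2⁻¹
    rw [mul_zero, neg_add'] at hq0
    exact ⟨by simpa using hv0.const_mul c, by simpa using (hq0.sub (hv0.pow 2)).const_mul c⟩
  obtain ⟨s, hs⟩ := exists_ne_zero_of_hasDerivAt (hV 0) (by have := hWpos 0; positivity)
  refine ⟨fun t => c * v t, fun t => ((hv t).const_mul c).differentiableAt,
    hu ▸ fun t => (hu' t).differentiableAt, fun t => by rw [hu, (hu' t).deriv],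
    ⟨s, mul_ne_zero (by rintro rfl; linarith) (div_ne_zero hs (hWpos s).ne')⟩,
    ⟨|c|, fun t => ?_⟩, (hlim hW_top).1, (hlim hW_bot).1, hu ▸ (hlim hW_top).2,
    hu ▸ (hlim hW_bot).2⟩
  simpa [abs_mul] using mul_le_mul_of_nonneg_left (abs_div_le_one_of_sq_le (hVW t) (hW1 t))
    (abs_nonneg c)
end

section
/- Let A > 0 and B < 0 be real constants with A² + 8B ≥ 0. If u : ℝ → ℝ is a twice differentiable function satisfying u''(t) = A·u(t)·u'(t) + B·u(t)³ for all t ∈ ℝ and u is periodic (i.e. there exists p > 0 with u(t + p) = u(t) for all t), then u is identically zero. In particular, the ODE admits no non-trivial periodic solutions. -/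
/-!
Choose `k > 0` with `2k² - Ak = B` (a real root exists because `A² + 8B ≥ 0`). The residual
`w = u' - k u²` then solves the linear equation `w' = (A - 2k) u w`, so
`w = w(0) exp((A - 2k) ∫₀ᵗ u)` has a constant sign. If `w ≥ 0`, then `u' ≥ k u² ≥ 0` and a
monotone periodic function is constant, which forces `u = 0`. If `w < 0`, periodicity of `w`
makes `∫₀ᵗ u` periodic, so `u` either vanishes identically or takes both signs; in the latter
case `u` has a zero at which `u' ≥ 0`, whereas `u' = w < 0` at every zero of `u`.
-/

open Function Set Filter Topology

namespace Function.Periodic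

variable {c : ℝ}

theorem eq_of_monotone {α β : Type*} [AddCommGroup α] [PartialOrder α] [IsOrderedAddMonoid α]
    [Archimedean α] [PartialOrder β] {f : α → β} {c : α} (hf : Periodic f c) (hc : 0 < c)
    (hmono : Monotone f) (x y : α) : f x = f y := by
  have key : ∀ x y, f x ≤ f y := fun x y => by
    obtain ⟨n, hn⟩ := Archimedean.arch (x - y) hc
    calc f x ≤ f (y + n • c) := hmono (by rw [← sub_le_iff_le_add']; exact hn)
      _ = f y := hf.nsmul n y
  exact (key x y).antisymm (key y x)

theorem eq_zero_of_hasDerivAt_of_nonneg {f f' : ℝ → ℝ} (hf : Periodic f c) (hc : 0 < c)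
    (hderiv : ∀ x, HasDerivAt f (f' x) x) (hnonneg : ∀ x, 0 ≤ f' x) (x : ℝ) : f' x = 0 := by
  have hconst : f = fun _ => f 0 :=
    funext (hf.eq_of_monotone hc (monotone_of_hasDerivAt_nonneg hderiv hnonneg) · 0)
  exact (hderiv x).unique (hconst ▸ hasDerivAt_const x (f 0))

theorem exists_neg_and_pos_of_hasDerivAt {f f' : ℝ → ℝ} (hf : Periodic f c) (hc : 0 < c)
    (hderiv : ∀ x, HasDerivAt f (f' x) x) (hne : ∃ x, f' x ≠ 0) :
    (∃ a, f' a < 0) ∧ ∃ b, 0 < f' b := by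
  obtain ⟨x, hx⟩ := hne
  constructor
  · by_contra! h
    exact hx (hf.eq_zero_of_hasDerivAt_of_nonneg hc hderiv h x)
  · by_contra! h
    have hneg : Periodic (fun x => -f x) c := fun x => by simp only [hf x]
    have := hneg.eq_zero_of_hasDerivAt_of_nonneg hc (fun x => (hderiv x).fun_neg)
      (fun x => neg_nonneg.mpr (h x)) x
    exact hx (neg_eq_zero.mp this)

end Function.Periodic

theorem exists_last_zero {f : ℝ → ℝ} {a b : ℝ} (hf : ContinuousOn f (Icc a b)) (hab : a ≤ b)
    (ha : f a ≤ 0) (hb : 0 < f b) : ∃ c ∈ Ico a b, f c = 0 ∧ ∀ x ∈ Ioc c b, 0 < f x := by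
  have hzero : ∀ x ∈ Icc a b, f x ≤ 0 → ∃ z ∈ Icc x b, f z = 0 := fun x hx hfx =>
    intermediate_value_Icc hx.2 (hf.mono (Icc_subset_Icc_left hx.1)) ⟨hfx, hb.le⟩
  have hZ : IsCompact (Icc a b ∩ f ⁻¹' {0}) := isCompact_Icc.of_isClosed_subset
    (hf.preimage_isClosed_of_isClosed isClosed_Icc isClosed_singleton) inter_subset_left
  obtain ⟨z, hz, hz0⟩ := hzero a (left_mem_Icc.mpr hab) ha
  obtain ⟨c, ⟨hc, hc0⟩, hmax⟩ := hZ.exists_isGreatest ⟨z, hz, hz0⟩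
  refine ⟨c, ⟨hc.1, hc.2.lt_of_ne ?_⟩, hc0, fun x hx => ?_⟩
  · rintro rfl
    exact hb.ne' hc0
  · by_contra! hfx
    obtain ⟨y, hy, hy0⟩ := hzero x ⟨hc.1.trans hx.1.le, hx.2⟩ hfx
    have : y ≤ c := hmax ⟨⟨hc.1.trans (hx.1.le.trans hy.1), hy.2⟩, hy0⟩
    linarith [hx.1, hy.1]

theorem exists_zero_deriv_nonneg_of_le {f : ℝ → ℝ} {a b : ℝ} (hf : Differentiable ℝ f)
    (hab : a ≤ b) (ha : f a ≤ 0) (hb : 0 < f b) : ∃ c, f c = 0 ∧ 0 ≤ deriv f c := by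
  obtain ⟨c, hc, hc0, hpos⟩ := exists_last_zero hf.continuous.continuousOn hab ha hb
  refine ⟨c, hc0, ?_⟩
  have hslope : Tendsto (slope f c) (𝓝[>] c) (𝓝 (deriv f c)) :=
    (hasDerivAt_iff_tendsto_slope.mp (hf c).hasDerivAt).mono_left
      (nhdsWithin_mono _ fun x hx => ne_of_gt hx)
  refine ge_of_tendsto hslope ?_
  filter_upwards [Ioc_mem_nhdsGT hc.2] with x hx
  rw [slope_def_field, hc0, sub_zero]
  exact div_nonneg (hpos x hx).le (sub_pos.mpr hx.1).le

theorem Function.Periodic.exists_zero_deriv_nonneg {f : ℝ → ℝ} {c a b : ℝ} (hf : Periodic f c)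
    (hc : 0 < c) (hdiff : Differentiable ℝ f) (ha : f a < 0) (hb : 0 < f b) :
    ∃ x, f x = 0 ∧ 0 ≤ deriv f x := by
  obtain ⟨n, hn⟩ := Archimedean.arch (a - b) hc
  have hb' : 0 < f (b + n • c) := (hf.nsmul n b).symm ▸ hb
  exact exists_zero_deriv_nonneg_of_le hdiff (by linarith) ha.le hb'

theorem eq_mul_exp_integral_of_hasDerivAt_mul_s18 {w g : ℝ → ℝ} (hg : Continuous g)
    (hw : ∀ t, HasDerivAt w (g t * w t) t) (t : ℝ) :
    w t = w 0 * Real.exp (∫ s in (0 : ℝ)..t, g s) := by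
  set G := fun t => ∫ s in (0 : ℝ)..t, g s
  have hG : ∀ t, HasDerivAt G (g t) t := fun t => (hg.integral_hasStrictDerivAt 0 t).hasDerivAt
  have hconst : ∀ t, HasDerivAt (fun s => w s * Real.exp (-G s)) 0 t := fun t =>
    ((hw t).fun_mul (hG t).fun_neg.exp).congr_deriv (by ring)
  have := is_const_of_deriv_eq_zero (fun x => (hconst x).differentiableAt)
    (fun x => (hconst x).deriv) t 0
  simp only [G, intervalIntegral.integral_same, neg_zero, Real.exp_zero, mul_one,
    Real.exp_neg] at this
  rw [← this, inv_mul_cancel_right₀ (Real.exp_pos _).ne']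

section Riccati

variable {A B k p : ℝ} {u : ℝ → ℝ}

/-- With `B = 2k² - Ak` the equation factors as `(d/dt - (A - 2k) u) (u' - k u²) = 0`. -/
noncomputable def riccatiResidual (k : ℝ) (u : ℝ → ℝ) (t : ℝ) : ℝ := deriv u t - k * u t ^ 2

theorem exists_riccati_coeff (hA : 0 < A) (hB : B < 0) (hdisc : 0 ≤ A ^ 2 + 8 * B) :
    ∃ k, 0 < k ∧ 0 < A - 2 * k ∧ B = 2 * k ^ 2 - A * k := by
  set D := Real.sqrt (A ^ 2 + 8 * B)
  have hD : D ^ 2 = A ^ 2 + 8 * B := Real.sq_sqrt hdisc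
  have hD0 : 0 ≤ D := Real.sqrt_nonneg _
  have hDA : D < A := by nlinarith
  exact ⟨(A - D) / 4, by linarith, by linarith, by nlinarith⟩

theorem hasDerivAt_riccatiResidual (hu : Differentiable ℝ u) (hu' : Differentiable ℝ (deriv u))
    (hode : ∀ t, deriv (deriv u) t = A * u t * deriv u t + B * (u t) ^ 3)
    (hk : B = 2 * k ^ 2 - A * k) (t : ℝ) :
    HasDerivAt (riccatiResidual k u) ((A - 2 * k) * u t * riccatiResidual k u t) t := by
  have h := (hu' t).hasDerivAt.sub (((hu t).hasDerivAt.pow 2).const_mul k)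
  refine h.congr_deriv ?_
  rw [hode t, riccatiResidual, hk]
  push_cast
  ring

theorem eq_zero_of_riccatiResidual_nonneg (hper : Periodic u p) (hp : 0 < p)
    (hu : Differentiable ℝ u) (hk : 0 < k) (hw : ∀ t, 0 ≤ riccatiResidual k u t) (t : ℝ) :
    u t = 0 := by
  have hderiv : ∀ t, k * u t ^ 2 ≤ deriv u t := fun t => sub_nonneg.mp (hw t)
  have hzero := hper.eq_zero_of_hasDerivAt_of_nonneg hp (fun t => (hu t).hasDerivAt)
    (fun t => (by positivity : 0 ≤ k * u t ^ 2).trans (hderiv t))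
  have : k * u t ^ 2 ≤ 0 := hzero t ▸ hderiv t
  exact pow_eq_zero_iff two_ne_zero |>.mp (by nlinarith)

theorem eq_zero_of_riccatiResidual_neg (hper : Periodic u p) (hp : 0 < p)
    (hu : Differentiable ℝ u) (hC : Periodic (fun t => ∫ s in (0 : ℝ)..t, u s) p)
    (hw : ∀ t, riccatiResidual k u t < 0) (t : ℝ) : u t = 0 := by
  by_contra ht
  obtain ⟨⟨a, ha⟩, b, hb⟩ := hC.exists_neg_and_pos_of_hasDerivAt hp
    (fun t => (hu.continuous.integral_hasStrictDerivAt 0 t).hasDerivAt) ⟨t, ht⟩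
  obtain ⟨c, hc0, hc⟩ := hper.exists_zero_deriv_nonneg hp hu ha hb
  have := hw c
  rw [riccatiResidual, hc0] at this
  linarith

end Riccati

open Real in
/-- A > 0, B < 0, A² + 8B ≥ 0: every periodic global solution of
u'' = A u u' + B u³ is identically zero. -/
theorem stmt_18 (A B : ℝ) (hA : 0 < A) (hB : B < 0) (hdisc : 0 ≤ A ^ 2 + 8 * B)
    (u : ℝ → ℝ) (hu : Differentiable ℝ u) (hu' : Differentiable ℝ (deriv u))
    (hode : ∀ t, deriv (deriv u) t = A * u t * deriv u t + B * (u t) ^ 3)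
    (hper : ∃ p : ℝ, 0 < p ∧ ∀ t, u (t + p) = u t) :
    ∀ t, u t = 0 := by
  obtain ⟨p, hp, hper⟩ := hper
  obtain ⟨k, hk, hAk, hBk⟩ := exists_riccati_coeff hA hB hdisc
  set C := fun t => ∫ s in (0 : ℝ)..t, u s
  have hwC : ∀ t, riccatiResidual k u t = riccatiResidual k u 0 * exp ((A - 2 * k) * C t) := by
    intro t
    rw [eq_mul_exp_integral_of_hasDerivAt_mul_s18 (g := fun s => (A - 2 * k) * u s)
      (continuous_const.mul hu.continuous) (hasDerivAt_riccatiResidual hu hu' hode hBk) t,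
      intervalIntegral.integral_const_mul]
  rcases le_or_gt 0 (riccatiResidual k u 0) with hw0 | hw0
  · exact eq_zero_of_riccatiResidual_nonneg hper hp hu hk fun t => hwC t ▸ by positivity
  have hwper : Periodic (riccatiResidual k u) p := fun t => by
    simp only [riccatiResidual, hper t, ← deriv_comp_add_const,
      show (fun s => u (s + p)) = u from funext hper]
  have hCper : Periodic C p := fun t => by
    have := hwC (t + p)
    rw [hwper t, hwC t, mul_right_inj' hw0.ne, exp_eq_exp, mul_right_inj' hAk.ne'] at this
    exact this.symm
  exact eq_zero_of_riccatiResidual_neg hper hp hu hCper fun t =>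
    hwC t ▸ mul_neg_of_neg_of_pos hw0 (exp_pos _)
end
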